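/- arXiv:2110.01156 — 7 statements merged into one kernel-verified Lean document; each statement's English description precedes it below -/
import Mathlib

section
/- For every integer n ≥ 1, the n-th Bell number satisfies B_n = 1 + (1/n!) · Σ_{k=1}^{n} M_{n,k} · n^k, where M_{n,k} are the Matsunaga numbers. -/
open Finset

/-- A set partition of `Fin n`: a finite family of nonempty blocks such that
every element lies in exactly one block. -/
def IsSetPartition {n : ℕ} (P : Finset (Finset (Fin n))) : Prop :=
  (∀ B ∈ P, B.Nonempty) ∧ ∀ x : Fin n, ∃! B, B ∈ P ∧ x ∈ B

/-- The Bell number `B n`: the number of set partitions of an `n`-element set. -/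
noncomputable def bell (n : ℕ) : ℕ :=
  Nat.card {P : Finset (Finset (Fin n)) // IsSetPartition P}

/-- `beta n`: the number of set partitions of an `n`-element set with no singleton blocks. -/
noncomputable def beta (n : ℕ) : ℕ :=
  Nat.card {P : Finset (Finset (Fin n)) // IsSetPartition P ∧ ∀ B ∈ P, 2 ≤ B.card}

/-- Signed Stirling numbers of the first kind, defined by
`∑ k, stirS n k * z ^ k = z (z-1) ⋯ (z-n+1)`. -/
def stirS : ℕ → ℕ → ℤ
  | 0, 0 => 1
  | 0, _ + 1 => 0
  | _ + 1, 0 => 0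
  | n + 1, k + 1 => stirS n k - (n : ℤ) * stirS n (k + 1)

/-- Unsigned Stirling numbers of the first kind (number of permutations of `n`
elements with `k` cycles). -/
def stirU : ℕ → ℕ → ℕ
  | 0, 0 => 1
  | 0, _ + 1 => 0
  | _ + 1, 0 => 0
  | n + 1, k + 1 => stirU n k + n * stirU n (k + 1)

/-- The Matsunaga numbers `M n k`, defined by the recurrence
`M n k = n * M (n-1) k + beta n * stirS n k` for `1 ≤ k ≤ n`, and `0` whenever
`n ≤ 1`, `k ≤ 0` or `k > n`. -/
noncomputable def matsunaga : ℕ → ℕ → ℤ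
  | 0, _ => 0
  | 1, _ => 0
  | n + 2, k =>
      if 1 ≤ k ∧ k ≤ n + 2 then
        ((n : ℤ) + 2) * matsunaga (n + 1) k + (beta (n + 2) : ℤ) * stirS (n + 2) k
      else 0

/-! ### Stirling number lemmas -/

lemma stirS_zero (m : ℕ) (h : 1 ≤ m) : stirS m 0 = 0 := by
  cases m with
  | zero => omega
  | succ m => rfl

lemma stirS_eq_zero {m k : ℕ} (h : m < k) : stirS m k = 0 := by
  induction m generalizing k with
  | zero => cases k with
    | zero => omega
    | succ k => rfl
  | succ n ih =>
    cases k with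
    | zero => omega
    | succ k =>
      show stirS n k - (n : ℤ) * stirS n (k + 1) = 0
      rw [ih (by omega), ih (by omega)]; ring

lemma stirS_falling (m : ℕ) (x : ℚ) :
    ∑ k ∈ Finset.range (m + 1), (stirS m k : ℚ) * x ^ k = ∏ j ∈ Finset.range m, (x - j) := by
  induction m with
  | zero => simp [stirS]
  | succ m ih =>
    rw [Finset.prod_range_succ, ← ih]
    rw [Finset.sum_range_succ' _ (m + 1)]
    have h0 : (stirS (m + 1) 0 : ℚ) * x ^ 0 = 0 := by
      rw [stirS_zero (m + 1) (by omega)]; simp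
    rw [h0, add_zero]
    have hrec : ∀ k, (stirS (m + 1) (k + 1) : ℚ) = stirS m k - (m : ℚ) * stirS m (k + 1) := by
      intro k; show ((stirS m k - (m : ℤ) * stirS m (k + 1) : ℤ) : ℚ) = _; push_cast; ring
    calc ∑ k ∈ range (m + 1), (stirS (m + 1) (k + 1) : ℚ) * x ^ (k + 1)
        = ∑ k ∈ range (m + 1), ((stirS m k : ℚ) * x ^ k * x
            - (m : ℚ) * ((stirS m (k + 1) : ℚ) * x ^ (k + 1))) := by
          refine Finset.sum_congr rfl fun k _ => ?_
          rw [hrec]; ring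
      _ = (∑ k ∈ range (m + 1), (stirS m k : ℚ) * x ^ k) * x
            - (m : ℚ) * ∑ k ∈ range (m + 1), (stirS m (k + 1) : ℚ) * x ^ (k + 1) := by
          rw [Finset.sum_sub_distrib, ← Finset.sum_mul, ← Finset.mul_sum]
      _ = (∑ k ∈ range (m + 1), (stirS m k : ℚ) * x ^ k) * x
            - (m : ℚ) * ∑ k ∈ range (m + 1), (stirS m k : ℚ) * x ^ k := by
          rcases Nat.eq_zero_or_pos m with hm | hm
          · simp [hm]
          · congr 2
            rw [Finset.sum_range_succ, Finset.sum_range_succ' (fun k => (stirS m k : ℚ) * x ^ k) m]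
            rw [stirS_zero m hm, stirS_eq_zero (Nat.lt_succ_self m)]
            simp
      _ = (∑ k ∈ range (m + 1), (stirS m k : ℚ) * x ^ k) * (x - m) := by ring

lemma prod_sub_eq_descFactorial (n m : ℕ) (h : m ≤ n) :
    ∏ j ∈ Finset.range m, ((n : ℚ) - j) = n.descFactorial m := by
  induction m with
  | zero => simp
  | succ m ih =>
    rw [Finset.prod_range_succ, ih (by omega), Nat.descFactorial_succ, Nat.cast_mul,
      Nat.cast_sub (by omega : m ≤ n)]
    ring

lemma stirS_sum_eq_descFactorial (n m : ℕ) (h1 : 1 ≤ m) (h2 : m ≤ n) :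
    ∑ k ∈ Finset.Icc 1 n, (stirS m k : ℚ) * (n : ℚ) ^ k = n.descFactorial m := by
  have hins : Finset.range (n + 1) = insert 0 (Finset.Icc 1 n) := by
    ext k; simp; omega
  have h3 : ∑ k ∈ Finset.range (n + 1), (stirS m k : ℚ) * (n : ℚ) ^ k
      = ∑ k ∈ Finset.Icc 1 n, (stirS m k : ℚ) * (n : ℚ) ^ k := by
    rw [hins, Finset.sum_insert (by simp), stirS_zero m h1]
    simp
  rw [← h3, ← Finset.sum_subset
    (Finset.range_subset_range.2 (by omega : m + 1 ≤ n + 1))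
    (fun k _ hk => by
      rw [stirS_eq_zero (show m < k by simp at hk; omega)]; simp)]
  rw [stirS_falling m (n : ℚ), prod_sub_eq_descFactorial n m h2]

/-! ### Partitions of finite sets -/

section Comb

variable {α β : Type*} [DecidableEq α] [DecidableEq β]

/-- `P` is a partition of the finite set `T`. -/
def PartOn (T : Finset α) (P : Finset (Finset α)) : Prop :=
  (∀ B ∈ P, B.Nonempty ∧ B ⊆ T) ∧ ∀ x ∈ T, ∃! B, B ∈ P ∧ x ∈ B

def NoSing (P : Finset (Finset α)) : Prop := ∀ B ∈ P, 2 ≤ B.card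

omit [DecidableEq α] in
lemma map_filter_mem (f : α ↪ β) (T : Finset α) (B : Finset β) (hB : B ⊆ T.map f) :
    (T.filter (fun a => f a ∈ B)).map f = B := by
  ext b
  simp only [Finset.mem_map, Finset.mem_filter]
  constructor
  · rintro ⟨a, ⟨-, ha⟩, rfl⟩; exact ha
  · intro hb
    obtain ⟨a, haT, rfl⟩ := Finset.mem_map.1 (hB hb)
    exact ⟨a, ⟨haT, hb⟩, rfl⟩

omit [DecidableEq α] in
lemma filter_map_self (f : α ↪ β) (T B : Finset α) (hB : B ⊆ T) :
    T.filter (fun a => f a ∈ B.map f) = B := by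
  ext a
  simp only [Finset.mem_filter, Finset.mem_map]
  constructor
  · rintro ⟨-, a', ha', h⟩
    rwa [← f.injective h]
  · intro ha; exact ⟨hB ha, a, ha, rfl⟩

/-- Transport of no-singleton partitions along an embedding. -/
noncomputable def partEquivMap (f : α ↪ β) (T : Finset α) :
    {P : Finset (Finset α) // PartOn T P ∧ NoSing P} ≃
      {P : Finset (Finset β) // PartOn (T.map f) P ∧ NoSing P} where
  toFun := fun ⟨P, hP, hs⟩ => ⟨P.image (Finset.map f), by
    constructor
    · constructor
      · intro B hB
        obtain ⟨A, hA, rfl⟩ := Finset.mem_image.1 hB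
        refine ⟨(Finset.map_nonempty (f := f)).2 ((hP.1 A hA).1), ?_⟩
        exact Finset.map_subset_map.2 (hP.1 A hA).2
      · intro y hy
        obtain ⟨x, hxT, rfl⟩ := Finset.mem_map.1 hy
        obtain ⟨A, ⟨hAP, hxA⟩, hAuniq⟩ := hP.2 x hxT
        refine ⟨A.map f, ⟨Finset.mem_image_of_mem _ hAP, Finset.mem_map_of_mem f hxA⟩, ?_⟩
        rintro B ⟨hBP, hxB⟩
        obtain ⟨A', hA', rfl⟩ := Finset.mem_image.1 hBP
        obtain ⟨x', hx'A', hx'⟩ := Finset.mem_map.1 hxB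
        cases f.injective hx'
        rw [hAuniq A' ⟨hA', hx'A'⟩]
    · intro B hB
      obtain ⟨A, hA, rfl⟩ := Finset.mem_image.1 hB
      rw [Finset.card_map]; exact hs A hA⟩
  invFun := fun ⟨Q, hQ, hs⟩ => ⟨Q.image (fun B => T.filter (fun a => f a ∈ B)), by
    have key : ∀ B ∈ Q, (T.filter (fun a => f a ∈ B)).map f = B := fun B hB =>
      map_filter_mem f T B (hQ.1 B hB).2
    have keycard : ∀ B ∈ Q, (T.filter (fun a => f a ∈ B)).card = B.card := fun B hB => by
      have := congrArg Finset.card (key B hB)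
      rwa [Finset.card_map] at this
    constructor
    · constructor
      · intro A hA
        obtain ⟨B, hB, rfl⟩ := Finset.mem_image.1 hA
        constructor
        · rw [← Finset.card_pos, keycard B hB, Finset.card_pos]; exact (hQ.1 B hB).1
        · exact Finset.filter_subset _ _
      · intro x hxT
        obtain ⟨B, ⟨hBQ, hxB⟩, hBuniq⟩ := hQ.2 (f x) (Finset.mem_map_of_mem f hxT)
        refine ⟨T.filter (fun a => f a ∈ B), ⟨Finset.mem_image_of_mem _ hBQ,
          Finset.mem_filter.2 ⟨hxT, hxB⟩⟩, ?_⟩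
        rintro A ⟨hAP, hxA⟩
        obtain ⟨B', hB', rfl⟩ := Finset.mem_image.1 hAP
        rw [hBuniq B' ⟨hB', (Finset.mem_filter.1 hxA).2⟩]
    · intro A hA
      obtain ⟨B, hB, rfl⟩ := Finset.mem_image.1 hA
      rw [keycard B hB]; exact hs B hB⟩
  left_inv := by
    rintro ⟨P, hP, hs⟩
    ext : 1
    simp only [Finset.image_image]
    rw [show ((fun B => T.filter (fun a => f a ∈ B)) ∘ Finset.map f)
        = (fun A => T.filter (fun a => f a ∈ A.map f)) from rfl]
    refine Eq.trans (Finset.image_congr fun A hA => filter_map_self f T A (hP.1 A hA).2) ?_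
    exact Finset.image_id
  right_inv := by
    rintro ⟨Q, hQ, hs⟩
    ext : 1
    simp only [Finset.image_image]
    refine Eq.trans (Finset.image_congr fun B hB => map_filter_mem f T B (hQ.1 B hB).2) ?_
    exact Finset.image_id

end Comb

lemma beta_eq_card (n : ℕ) :
    beta n = Nat.card {P : Finset (Finset (Fin n)) // PartOn Finset.univ P ∧ NoSing P} := by
  apply Nat.card_congr
  apply Equiv.subtypeEquivRight
  intro P
  unfold IsSetPartition PartOn NoSing
  constructor
  · rintro ⟨⟨h1, h2⟩, h3⟩
    exact ⟨⟨fun B hB => ⟨h1 B hB, Finset.subset_univ B⟩, fun x _ => h2 x⟩, h3⟩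
  · rintro ⟨⟨h1, h2⟩, h3⟩
    exact ⟨⟨fun B hB => (h1 B hB).1, fun x => h2 x (Finset.mem_univ x)⟩, h3⟩

lemma card_parts_eq_beta {n : ℕ} (T : Finset (Fin n)) :
    Nat.card {P : Finset (Finset (Fin n)) // PartOn T P ∧ NoSing P} = beta T.card := by
  rw [beta_eq_card]
  have e1 : T.attach.map (Function.Embedding.subtype _) = T := Finset.attach_map_val
  have e2 : (Finset.univ : Finset {x // x ∈ T}) = T.attach := rfl
  have h1 := Nat.card_congr (partEquivMap (Function.Embedding.subtype (· ∈ T))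
      (Finset.univ : Finset {x // x ∈ T}))
  rw [e2, e1] at h1
  have h2 := Nat.card_congr (partEquivMap (T.equivFin).symm.toEmbedding
      (Finset.univ : Finset (Fin T.card)))
  rw [Finset.map_univ_equiv] at h2
  rw [← h1, ← e2, ← h2]

section SigmaSec

variable {n : ℕ}

/-- Split a partition into its set of singleton elements and its no-singleton part. -/
noncomputable def toSigma (P : {P : Finset (Finset (Fin n)) // IsSetPartition P}) :
    Σ S : Finset (Fin n), {Q : Finset (Finset (Fin n)) // PartOn Sᶜ Q ∧ NoSing Q} :=
  ⟨Finset.univ.filter (fun x => ({x} : Finset (Fin n)) ∈ P.1),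
    ⟨P.1.filter (fun B => 2 ≤ B.card), by
      obtain ⟨P, hP⟩ := P
      have hsing : ∀ x : Fin n, ∀ B ∈ P, x ∈ B → 2 ≤ B.card →
          ({x} : Finset (Fin n)) ∉ P := by
        intro x B hB hxB hcard hs
        obtain ⟨C, -, hCuniq⟩ := hP.2 x
        have h1 := hCuniq B ⟨hB, hxB⟩
        have h2 := hCuniq {x} ⟨hs, Finset.mem_singleton_self x⟩
        rw [← h2] at h1
        rw [h1] at hcard
        simp at hcard
      constructor
      · constructor
        · intro B hB
          obtain ⟨hBP, hcard⟩ := Finset.mem_filter.1 hB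
          refine ⟨hP.1 B hBP, ?_⟩
          intro x hxB
          simp only [Finset.mem_compl, Finset.mem_filter, Finset.mem_univ, true_and]
          exact hsing x B hBP hxB hcard
        · intro x hx
          simp only [Finset.mem_compl, Finset.mem_filter, Finset.mem_univ, true_and] at hx
          obtain ⟨B, ⟨hBP, hxB⟩, hBuniq⟩ := hP.2 x
          have hcard : 2 ≤ B.card := by
            rcases Nat.lt_or_ge B.card 2 with h | h
            · exfalso
              have hBx : B = {x} := by
                have h1 : 0 < B.card := Finset.card_pos.2 ⟨x, hxB⟩
                have : B.card = 1 := by omega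
                obtain ⟨y, hy⟩ := Finset.card_eq_one.1 this
                rw [hy] at hxB; rw [Finset.mem_singleton] at hxB; rw [hy, hxB]
              rw [hBx] at hBP; exact hx hBP
            · exact h
          refine ⟨B, ⟨Finset.mem_filter.2 ⟨hBP, hcard⟩, hxB⟩, ?_⟩
          rintro C ⟨hCP, hxC⟩
          exact hBuniq C ⟨(Finset.mem_filter.1 hCP).1, hxC⟩
      · intro B hB; exact (Finset.mem_filter.1 hB).2⟩⟩

/-- Reassemble a partition from singletons and a no-singleton partition. -/
def ofSigma (x : Σ S : Finset (Fin n), {Q : Finset (Finset (Fin n)) // PartOn Sᶜ Q ∧ NoSing Q}) :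
    {P : Finset (Finset (Fin n)) // IsSetPartition P} :=
  ⟨x.2.1 ∪ x.1.image (fun x => {x}), by
    obtain ⟨S, Q, hQ, hs⟩ := x
    constructor
    · intro B hB
      rcases Finset.mem_union.1 hB with h | h
      · exact (hQ.1 B h).1
      · obtain ⟨x, -, rfl⟩ := Finset.mem_image.1 h
        exact ⟨x, Finset.mem_singleton_self x⟩
    · intro x
      by_cases hxS : x ∈ S
      · refine ⟨{x}, ⟨Finset.mem_union_right _ (Finset.mem_image_of_mem _ hxS),
          Finset.mem_singleton_self x⟩, ?_⟩
        rintro B ⟨hB, hxB⟩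
        rcases Finset.mem_union.1 hB with h | h
        · exact absurd (Finset.mem_compl.1 ((hQ.1 B h).2 hxB)) (by simp [hxS])
        · obtain ⟨y, -, rfl⟩ := Finset.mem_image.1 h
          rw [Finset.mem_singleton] at hxB; rw [hxB]
      · obtain ⟨B, ⟨hBQ, hxB⟩, hBuniq⟩ := hQ.2 x (Finset.mem_compl.2 hxS)
        refine ⟨B, ⟨Finset.mem_union_left _ hBQ, hxB⟩, ?_⟩
        rintro C ⟨hC, hxC⟩
        rcases Finset.mem_union.1 hC with h | h
        · exact hBuniq C ⟨h, hxC⟩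
        · obtain ⟨y, hy, rfl⟩ := Finset.mem_image.1 h
          rw [Finset.mem_singleton] at hxC
          exact absurd (hxC ▸ hy) hxS⟩

lemma ofSigma_toSigma (P : {P : Finset (Finset (Fin n)) // IsSetPartition P}) :
    ofSigma (toSigma P) = P := by
  obtain ⟨P, hP⟩ := P
  apply Subtype.ext
  show P.filter (fun B => 2 ≤ B.card) ∪
    (Finset.univ.filter (fun x => ({x} : Finset (Fin n)) ∈ P)).image (fun x => {x}) = P
  ext B
  simp only [Finset.mem_union, Finset.mem_filter, Finset.mem_image, Finset.mem_univ, true_and]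
  constructor
  · rintro (⟨hB, -⟩ | ⟨x, hx, rfl⟩)
    · exact hB
    · exact hx
  · intro hB
    rcases Nat.lt_or_ge B.card 2 with h | h
    · have h1 : 0 < B.card := Finset.card_pos.2 (hP.1 B hB)
      have : B.card = 1 := by omega
      obtain ⟨y, rfl⟩ := Finset.card_eq_one.1 this
      exact Or.inr ⟨y, hB, rfl⟩
    · exact Or.inl ⟨hB, h⟩

lemma ofSigma_injective :
    Function.Injective (ofSigma (n := n)) := by
  rintro ⟨S₁, Q₁, hQ₁, hs₁⟩ ⟨S₂, Q₂, hQ₂, hs₂⟩ h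
  have h' : Q₁ ∪ S₁.image (fun x => ({x} : Finset (Fin n)))
      = Q₂ ∪ S₂.image (fun x => {x}) := congrArg Subtype.val h
  have hSsub : ∀ (S S' : Finset (Fin n)) (Q Q' : Finset (Finset (Fin n))),
      NoSing Q' → Q ∪ S.image (fun x => ({x} : Finset (Fin n)))
        = Q' ∪ S'.image (fun x => {x}) → S ⊆ S' := by
    intro S S' Q Q' hns heq x hx
    have hmem : ({x} : Finset (Fin n)) ∈ Q' ∪ S'.image (fun x => {x}) := by
      rw [← heq]
      exact Finset.mem_union_right _ (Finset.mem_image_of_mem _ hx)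
    rcases Finset.mem_union.1 hmem with hh | hh
    · have := hns _ hh; simp at this
    · obtain ⟨y, hy, hxy⟩ := Finset.mem_image.1 hh
      have : y = x := Finset.mem_singleton.1 (hxy ▸ Finset.mem_singleton_self y)
      exact this ▸ hy
  have hS : S₁ = S₂ :=
    Finset.Subset.antisymm (hSsub S₁ S₂ Q₁ Q₂ hs₂ h') (hSsub S₂ S₁ Q₂ Q₁ hs₁ h'.symm)
  subst hS
  have hQsub : ∀ (Q Q' : Finset (Finset (Fin n))),
      NoSing Q → Q ∪ S₁.image (fun x => ({x} : Finset (Fin n)))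
        = Q' ∪ S₁.image (fun x => {x}) → Q ⊆ Q' := by
    intro Q Q' hns heq B hB
    have hmem : B ∈ Q' ∪ S₁.image (fun x => ({x} : Finset (Fin n))) := by
      rw [← heq]; exact Finset.mem_union_left _ hB
    rcases Finset.mem_union.1 hmem with hh | hh
    · exact hh
    · obtain ⟨y, -, rfl⟩ := Finset.mem_image.1 hh
      have := hns _ hB; simp at this
  have hQ : Q₁ = Q₂ :=
    Finset.Subset.antisymm (hQsub Q₁ Q₂ hs₁ h') (hQsub Q₂ Q₁ hs₂ h'.symm)
  subst hQ
  rfl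

noncomputable def partSigmaEquiv (n : ℕ) :
    {P : Finset (Finset (Fin n)) // IsSetPartition P} ≃
      (Σ S : Finset (Fin n), {Q : Finset (Finset (Fin n)) // PartOn Sᶜ Q ∧ NoSing Q}) :=
  ⟨toSigma, ofSigma, fun P => ofSigma_toSigma P,
    fun x => ofSigma_injective (ofSigma_toSigma (ofSigma x))⟩

end SigmaSec

/-! ### Counting -/

lemma bell_eq_sum (n : ℕ) :
    bell n = ∑ m ∈ Finset.range (n + 1), n.choose m * beta m := by
  classical
  have h1 : bell n = Nat.card
      (Σ S : Finset (Fin n), {Q : Finset (Finset (Fin n)) // PartOn Sᶜ Q ∧ NoSing Q}) :=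
    Nat.card_congr (partSigmaEquiv n)
  letI : ∀ S : Finset (Fin n),
      Fintype {Q : Finset (Finset (Fin n)) // PartOn Sᶜ Q ∧ NoSing Q} :=
    fun S => Fintype.ofFinite _
  rw [h1, Nat.card_eq_fintype_card, Fintype.card_sigma]
  have h2 : ∀ S : Finset (Fin n),
      Fintype.card {Q : Finset (Finset (Fin n)) // PartOn Sᶜ Q ∧ NoSing Q}
        = beta (n - S.card) := by
    intro S
    rw [← Nat.card_eq_fintype_card, card_parts_eq_beta Sᶜ, Finset.card_compl,
      Fintype.card_fin]
  rw [Finset.sum_congr rfl (fun S _ => h2 S)]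
  rw [show (Finset.univ : Finset (Finset (Fin n))) = Finset.univ.powerset from
    (Finset.powerset_univ).symm]
  rw [Finset.sum_powerset]
  rw [Finset.card_univ, Fintype.card_fin]
  have h3 : ∀ j ∈ Finset.range (n + 1),
      ∑ S ∈ Finset.powersetCard j (Finset.univ : Finset (Fin n)), beta (n - S.card)
        = n.choose j * beta (n - j) := by
    intro j hj
    rw [Finset.sum_congr rfl (fun S hS => by
      rw [(Finset.mem_powersetCard.1 hS).2])]
    rw [Finset.sum_const, Finset.card_powersetCard, Finset.card_univ, Fintype.card_fin,
      smul_eq_mul]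
  rw [Finset.sum_congr rfl h3]
  rw [← Finset.sum_range_reflect (fun m => n.choose m * beta m) (n + 1)]
  refine Finset.sum_congr rfl fun j hj => ?_
  simp only [Nat.add_sub_cancel]
  rw [Nat.choose_symm (by simp at hj; omega)]

lemma beta_zero : beta 0 = 1 := by
  haveI : Unique {P : Finset (Finset (Fin 0)) // IsSetPartition P ∧ ∀ B ∈ P, 2 ≤ B.card} := by
    refine ⟨⟨⟨∅, ⟨fun B hB => absurd hB (Finset.notMem_empty B), fun x => x.elim0⟩,
      fun B hB => absurd hB (Finset.notMem_empty B)⟩⟩, ?_⟩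
    rintro ⟨P, ⟨h1, -⟩, -⟩
    apply Subtype.ext
    show P = ∅
    rw [Finset.eq_empty_iff_forall_notMem]
    intro B hB
    obtain ⟨x, -⟩ := h1 B hB
    exact x.elim0
  exact Nat.card_unique

lemma beta_one : beta 1 = 0 := by
  haveI : IsEmpty {P : Finset (Finset (Fin 1)) // IsSetPartition P ∧ ∀ B ∈ P, 2 ≤ B.card} := by
    constructor
    rintro ⟨P, ⟨-, h2⟩, h3⟩
    obtain ⟨B, ⟨hBP, -⟩, -⟩ := h2 0
    have := h3 B hBP
    have hle : B.card ≤ 1 := by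
      calc B.card ≤ Fintype.card (Fin 1) := Finset.card_le_univ B
        _ = 1 := Fintype.card_fin 1
    omega
  exact Nat.card_of_isEmpty

/-! ### Matsunaga closed form -/

lemma matsunaga_closed (n : ℕ) : ∀ k, 1 ≤ k →
    (matsunaga n k : ℚ)
      = n.factorial * ∑ m ∈ Finset.Icc 2 n, (beta m : ℚ) * stirS m k / m.factorial := by
  induction n with
  | zero => intro k hk; simp [matsunaga]
  | succ n ih =>
    cases n with
    | zero =>
      intro k hk
      simp [matsunaga, show Finset.Icc 2 1 = ∅ from rfl]
    | succ n' =>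
      intro k hk
      by_cases hkn : k ≤ n' + 2
      · rw [show matsunaga (n' + 2) k = ((n' : ℤ) + 2) * matsunaga (n' + 1) k
            + (beta (n' + 2) : ℤ) * stirS (n' + 2) k from by
          rw [matsunaga]; rw [if_pos ⟨hk, hkn⟩]]
        push_cast
        rw [ih k hk]
        rw [Finset.sum_Icc_succ_top (by omega : 2 ≤ n' + 2)]
        have hne : (((n' + 2).factorial : ℚ)) ≠ 0 := Nat.cast_ne_zero.2 (Nat.factorial_ne_zero _)
        have hfac : ((n' + 2).factorial : ℚ) = ((n' : ℚ) + 2) * ((n' + 1).factorial : ℚ) := by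
          rw [show n' + 2 = (n' + 1) + 1 from rfl, Nat.factorial_succ]
          push_cast; ring
        rw [mul_add, hfac]
        congr 1
        · ring
        · field_simp
      · rw [show matsunaga (n' + 2) k = 0 from by rw [matsunaga, if_neg (by omega)]]
        have hz : ∀ m ∈ Finset.Icc 2 (n' + 2),
            (beta m : ℚ) * stirS m k / m.factorial = 0 := by
          intro m hm
          rw [stirS_eq_zero (show m < k by simp at hm; omega)]
          simp
        rw [Finset.sum_congr rfl hz]
        simp


/-- Matsunaga's identity: for `n ≥ 1`,
`B n = 1 + (1/n!) * ∑_{k=1}^{n} M n k * n ^ k`. -/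
theorem bell_eq_matsunaga_sum (n : ℕ) (hn : 1 ≤ n) :
    (bell n : ℚ) =
      1 + (1 / (n.factorial : ℚ)) *
        ∑ k ∈ Finset.Icc 1 n, (matsunaga n k : ℚ) * (n : ℚ) ^ k := by
  have hfacne : ((n.factorial : ℚ)) ≠ 0 := Nat.cast_ne_zero.2 (Nat.factorial_ne_zero _)
  have hsum : ∑ k ∈ Finset.Icc 1 n, (matsunaga n k : ℚ) * (n : ℚ) ^ k
      = (n.factorial : ℚ) * ∑ m ∈ Finset.Icc 2 n, (n.choose m : ℚ) * beta m := by
    calc ∑ k ∈ Finset.Icc 1 n, (matsunaga n k : ℚ) * (n : ℚ) ^ k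
        = ∑ k ∈ Finset.Icc 1 n, ∑ m ∈ Finset.Icc 2 n,
            (n.factorial : ℚ) * ((beta m : ℚ) * stirS m k / m.factorial) * (n : ℚ) ^ k := by
          refine Finset.sum_congr rfl fun k hk => ?_
          rw [matsunaga_closed n k (Finset.mem_Icc.1 hk).1]
          rw [Finset.mul_sum, Finset.sum_mul]
      _ = ∑ m ∈ Finset.Icc 2 n, ∑ k ∈ Finset.Icc 1 n,
            (n.factorial : ℚ) * ((beta m : ℚ) * stirS m k / m.factorial) * (n : ℚ) ^ k :=
          Finset.sum_comm
      _ = ∑ m ∈ Finset.Icc 2 n, (n.factorial : ℚ) * (beta m : ℚ) / m.factorial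
            * ∑ k ∈ Finset.Icc 1 n, (stirS m k : ℚ) * (n : ℚ) ^ k := by
          refine Finset.sum_congr rfl fun m hm => ?_
          rw [Finset.mul_sum]
          refine Finset.sum_congr rfl fun k hk => ?_
          ring
      _ = ∑ m ∈ Finset.Icc 2 n, (n.factorial : ℚ) * ((n.choose m : ℚ) * beta m) := by
          refine Finset.sum_congr rfl fun m hm => ?_
          obtain ⟨hm1, hm2⟩ := Finset.mem_Icc.1 hm
          rw [stirS_sum_eq_descFactorial n m (by omega) hm2,
            Nat.descFactorial_eq_factorial_mul_choose]
          have hmne : ((m.factorial : ℚ)) ≠ 0 := Nat.cast_ne_zero.2 (Nat.factorial_ne_zero _)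
          push_cast
          field_simp
      _ = (n.factorial : ℚ) * ∑ m ∈ Finset.Icc 2 n, (n.choose m : ℚ) * beta m := by
          rw [Finset.mul_sum]
  rw [hsum]
  rw [one_div, inv_mul_cancel_left₀ hfacne]
  rw [bell_eq_sum n]
  push_cast
  have hsplit : Finset.range (n + 1) = insert 0 (insert 1 (Finset.Icc 2 n)) := by
    ext k; simp; omega
  rw [hsplit, Finset.sum_insert (by simp), Finset.sum_insert (by simp)]
  rw [beta_zero, beta_one]
  push_cast
  simp
end

section
/- For every integer n ≥ 0, the Bell numbers and the singleton-free partition numbers satisfy B_n = β_{n+1} + β_n. -/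
open Finset

namespace BellBeta
open scoped Classical
variable {n : ℕ}

def up (B : Finset (Fin n)) : Finset (Fin (n + 1)) :=
  B.map ⟨Fin.castSucc, Fin.castSucc_injective n⟩

noncomputable def down (B : Finset (Fin (n + 1))) : Finset (Fin n) :=
  univ.filter fun x => x.castSucc ∈ B

lemma mem_up {B : Finset (Fin n)} {y : Fin (n + 1)} :
    y ∈ up B ↔ ∃ x ∈ B, Fin.castSucc x = y := by simp [up]

lemma mem_down {B : Finset (Fin (n + 1))} {x : Fin n} :
    x ∈ down B ↔ x.castSucc ∈ B := by simp [down]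

lemma last_not_mem_up {B : Finset (Fin n)} : Fin.last n ∉ up B := by
  simp only [mem_up]
  rintro ⟨x, -, h⟩
  exact absurd h (Fin.castSucc_lt_last x).ne

lemma down_up (B : Finset (Fin n)) : down (up B) = B := by
  ext x
  simp only [mem_down, mem_up]
  constructor
  · rintro ⟨x', hx', h⟩
    rwa [← Fin.castSucc_injective n h]
  · exact fun h => ⟨x, h, rfl⟩

lemma up_down (B : Finset (Fin (n + 1))) : up (down B) = B.erase (Fin.last n) := by
  ext y
  simp only [mem_up, mem_down, mem_erase]
  constructor
  · rintro ⟨x, hx, rfl⟩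
    exact ⟨(Fin.castSucc_lt_last x).ne, hx⟩
  · rintro ⟨hne, hy⟩
    obtain ⟨x, rfl⟩ := Fin.exists_castSucc_eq.mpr hne
    exact ⟨x, hy, rfl⟩

lemma card_up (B : Finset (Fin n)) : (up B).card = B.card := Finset.card_map _

lemma card_down_of_not_mem {B : Finset (Fin (n + 1))} (h : Fin.last n ∉ B) :
    (down B).card = B.card := by
  rw [← card_up, up_down, Finset.erase_eq_of_notMem h]

noncomputable def singles (P : Finset (Finset (Fin n))) : Finset (Fin n) :=
  univ.filter fun x => ({x} : Finset (Fin n)) ∈ P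

lemma mem_singles {P : Finset (Finset (Fin n))} {x : Fin n} :
    x ∈ singles P ↔ ({x} : Finset (Fin n)) ∈ P := by simp [singles]

noncomputable def F (P : Finset (Finset (Fin n))) : Finset (Finset (Fin (n + 1))) :=
  insert (insert (Fin.last n) (up (singles P)))
    ((P.filter fun B => 2 ≤ B.card).image up)

noncomputable def B0 (Q : Finset (Finset (Fin (n + 1)))) : Finset (Fin (n + 1)) :=
  if h : ∃ B ∈ Q, Fin.last n ∈ B then h.choose else ∅

noncomputable def G (Q : Finset (Finset (Fin (n + 1)))) : Finset (Finset (Fin n)) :=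
  ((Q.filter fun B => Fin.last n ∉ B).image down) ∪
    ((down (B0 Q)).image fun x => ({x} : Finset (Fin n)))

lemma B0_spec {Q : Finset (Finset (Fin (n + 1)))} (h : ∃ B ∈ Q, Fin.last n ∈ B) :
    B0 Q ∈ Q ∧ Fin.last n ∈ B0 Q := by
  rw [B0, dif_pos h]
  exact h.choose_spec

lemma block_eq {m : ℕ} {P : Finset (Finset (Fin m))} (hP : IsSetPartition P)
    {B C : Finset (Fin m)} {x : Fin m} (hB : B ∈ P) (hC : C ∈ P)
    (hxB : x ∈ B) (hxC : x ∈ C) : B = C := by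
  obtain ⟨D, -, hD⟩ := hP.2 x
  rw [hD B ⟨hB, hxB⟩, hD C ⟨hC, hxC⟩]

lemma mem_F {P : Finset (Finset (Fin n))} {C : Finset (Fin (n + 1))} :
    C ∈ F P ↔ C = insert (Fin.last n) (up (singles P)) ∨
      ∃ B, (B ∈ P ∧ 2 ≤ B.card) ∧ up B = C := by
  simp [F, Finset.mem_insert, Finset.mem_image, Finset.mem_filter]

lemma mem_G {Q : Finset (Finset (Fin (n + 1)))} {C : Finset (Fin n)} :
    C ∈ G Q ↔ (∃ B, (B ∈ Q ∧ Fin.last n ∉ B) ∧ down B = C) ∨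
      ∃ x ∈ down (B0 Q), ({x} : Finset (Fin n)) = C := by
  simp [G, Finset.mem_union, Finset.mem_image, Finset.mem_filter]


lemma F_mem {P : Finset (Finset (Fin n))} (hP : IsSetPartition P)
    (hS : (singles P).Nonempty) :
    IsSetPartition (F P) ∧ ∀ B ∈ F P, 2 ≤ B.card := by
  refine ⟨⟨?_, ?_⟩, ?_⟩
  · -- nonempty blocks
    intro C hC
    rcases mem_F.mp hC with rfl | ⟨B, ⟨hB, -⟩, rfl⟩
    · exact insert_nonempty _ _
    · obtain ⟨x, hx⟩ := hP.1 B hB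
      exact ⟨x.castSucc, mem_up.mpr ⟨x, hx, rfl⟩⟩
  · -- unique block
    intro y
    rcases eq_or_ne y (Fin.last n) with rfl | hy
    · refine ⟨insert (Fin.last n) (up (singles P)),
        ⟨mem_F.mpr (Or.inl rfl), mem_insert_self _ _⟩, ?_⟩
      rintro C ⟨hC, hyC⟩
      rcases mem_F.mp hC with rfl | ⟨B, -, rfl⟩
      · rfl
      · exact absurd hyC last_not_mem_up
    · obtain ⟨x, rfl⟩ := Fin.exists_castSucc_eq.mpr hy
      obtain ⟨B, ⟨hB, hxB⟩, huniq⟩ := hP.2 x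
      by_cases hcard : 2 ≤ B.card
      · refine ⟨up B, ⟨mem_F.mpr (Or.inr ⟨B, ⟨hB, hcard⟩, rfl⟩),
          mem_up.mpr ⟨x, hxB, rfl⟩⟩, ?_⟩
        rintro C ⟨hC, hyC⟩
        rcases mem_F.mp hC with rfl | ⟨B', ⟨hB', -⟩, rfl⟩
        · rcases mem_insert.mp hyC with h | h
          · exact absurd h (Fin.castSucc_lt_last x).ne
          · obtain ⟨x', hx', he⟩ := mem_up.mp h
            cases Fin.castSucc_injective n he
            have h1 : ({x} : Finset (Fin n)) ∈ P := mem_singles.mp hx'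
            have := huniq {x} ⟨h1, mem_singleton_self x⟩
            rw [← this] at hcard
            simp at hcard
        · obtain ⟨x', hx', he⟩ := mem_up.mp hyC
          cases Fin.castSucc_injective n he
          rw [huniq B' ⟨hB', hx'⟩]
      · have h1 : B.card = 1 := by
          have := card_pos.mpr (hP.1 B hB); omega
        obtain ⟨x0, rfl⟩ := card_eq_one.mp h1
        obtain rfl : x = x0 := mem_singleton.mp hxB
        have hxS : x ∈ singles P := mem_singles.mpr hB
        refine ⟨insert (Fin.last n) (up (singles P)),
          ⟨mem_F.mpr (Or.inl rfl),
            mem_insert_of_mem (mem_up.mpr ⟨x, hxS, rfl⟩)⟩, ?_⟩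
        rintro C ⟨hC, hyC⟩
        rcases mem_F.mp hC with rfl | ⟨B', ⟨hB', hc'⟩, rfl⟩
        · rfl
        · obtain ⟨x', hx', he⟩ := mem_up.mp hyC
          cases Fin.castSucc_injective n he
          have := huniq B' ⟨hB', hx'⟩
          rw [this] at hc'
          simp at hc'
  · -- no singletons
    intro C hC
    rcases mem_F.mp hC with rfl | ⟨B, ⟨-, hc⟩, rfl⟩
    · rw [card_insert_of_notMem last_not_mem_up, card_up]
      have := card_pos.mpr hS
      omega
    · rwa [card_up]

lemma G_mem {Q : Finset (Finset (Fin (n + 1)))} (hQ : IsSetPartition Q)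
    (hQ2 : ∀ B ∈ Q, 2 ≤ B.card) :
    IsSetPartition (G Q) ∧ ¬ ∀ B ∈ G Q, 2 ≤ B.card := by
  have hex : ∃ B ∈ Q, Fin.last n ∈ B := by
    obtain ⟨B, ⟨hB, hl⟩, -⟩ := hQ.2 (Fin.last n)
    exact ⟨B, hB, hl⟩
  obtain ⟨hB0Q, hB0l⟩ := B0_spec hex
  have hdB0 : (down (B0 Q)).Nonempty := by
    have h2 : 2 ≤ (B0 Q).card := hQ2 _ hB0Q
    have : ((B0 Q).erase (Fin.last n)).Nonempty := by
      rw [← card_pos, card_erase_of_mem hB0l]; omega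
    obtain ⟨y, hy⟩ := this
    obtain ⟨x, rfl⟩ := Fin.exists_castSucc_eq.mpr (mem_erase.mp hy).1
    exact ⟨x, mem_down.mpr (mem_erase.mp hy).2⟩
  refine ⟨⟨?_, ?_⟩, ?_⟩
  · intro C hC
    rcases mem_G.mp hC with ⟨B, ⟨hB, hl⟩, rfl⟩ | ⟨x, -, rfl⟩
    · obtain ⟨y, hy⟩ := hQ.1 B hB
      have hyne : y ≠ Fin.last n := fun h => hl (h ▸ hy)
      obtain ⟨x, rfl⟩ := Fin.exists_castSucc_eq.mpr hyne
      exact ⟨x, mem_down.mpr hy⟩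
    · exact singleton_nonempty x
  · intro x
    obtain ⟨B, ⟨hB, hxB⟩, huniq⟩ := hQ.2 x.castSucc
    by_cases hl : Fin.last n ∈ B
    · have hBeq : B = B0 Q := block_eq hQ hB hB0Q hl hB0l
      refine ⟨{x}, ⟨mem_G.mpr (Or.inr ⟨x, mem_down.mpr (hBeq ▸ hxB), rfl⟩),
        mem_singleton_self x⟩, ?_⟩
      rintro C ⟨hC, hxC⟩
      rcases mem_G.mp hC with ⟨B', ⟨hB', hl'⟩, rfl⟩ | ⟨x', -, rfl⟩
      · have : B' = B := huniq B' ⟨hB', mem_down.mp hxC⟩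
        exact absurd (this ▸ hl) hl'
      · rw [mem_singleton.mp hxC]
    · refine ⟨down B, ⟨mem_G.mpr (Or.inl ⟨B, ⟨hB, hl⟩, rfl⟩), mem_down.mpr hxB⟩, ?_⟩
      rintro C ⟨hC, hxC⟩
      rcases mem_G.mp hC with ⟨B', ⟨hB', -⟩, rfl⟩ | ⟨x', hx', rfl⟩
      · rw [huniq B' ⟨hB', mem_down.mp hxC⟩]
      · obtain rfl : x = x' := mem_singleton.mp hxC
        have : B0 Q = B := huniq _ ⟨hB0Q, mem_down.mp hx'⟩
        exact absurd (this ▸ hB0l) hl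
  · intro h
    obtain ⟨x, hx⟩ := hdB0
    have := h {x} (mem_G.mpr (Or.inr ⟨x, hx, rfl⟩))
    simp at this

lemma G_F {P : Finset (Finset (Fin n))} (hP : IsSetPartition P)
    (_hS : (singles P).Nonempty) : G (F P) = P := by
  -- B0 (F P) is the inserted block
  have hex : ∃ B ∈ F P, Fin.last n ∈ B :=
    ⟨_, mem_F.mpr (Or.inl rfl), mem_insert_self _ _⟩
  have hB0 : B0 (F P) = insert (Fin.last n) (up (singles P)) := by
    obtain ⟨hmem, hlast⟩ := B0_spec hex
    rcases mem_F.mp hmem with h | ⟨B, -, he⟩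
    · exact h
    · exact absurd (he ▸ hlast) last_not_mem_up
  have hfil : (F P).filter (fun B => Fin.last n ∉ B) =
      (P.filter fun B => 2 ≤ B.card).image up := by
    ext C
    simp only [mem_filter, mem_F, mem_image]
    constructor
    · rintro ⟨h | ⟨B, hB, rfl⟩, hl⟩
      · exact absurd (h ▸ mem_insert_self _ _) hl
      · exact ⟨B, hB, rfl⟩
    · rintro ⟨B, hB, rfl⟩
      exact ⟨Or.inr ⟨B, hB, rfl⟩, last_not_mem_up⟩
  have hdT0 : down (insert (Fin.last n) (up (singles P))) = singles P := by
    ext x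
    simp only [mem_down, Finset.mem_insert]
    constructor
    · rintro (h | h)
      · exact absurd h (Fin.castSucc_lt_last x).ne
      · have := down_up (singles P) ▸ mem_down.mpr h
        exact this
    · intro h
      exact Or.inr (mem_up.mpr ⟨x, h, rfl⟩)
  have himg : ((P.filter fun B => 2 ≤ B.card).image up).image down =
      P.filter fun B => 2 ≤ B.card := by
    rw [Finset.image_image]
    have : ∀ B ∈ P.filter fun B => 2 ≤ B.card, (down ∘ up) B = id B := by
      intro B _
      exact down_up B
    rw [Finset.image_congr this, Finset.image_id]
  have hsing : (singles P).image (fun x => ({x} : Finset (Fin n))) =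
      P.filter fun B => B.card = 1 := by
    ext B
    simp only [mem_image, mem_filter]
    constructor
    · rintro ⟨x, hx, rfl⟩
      exact ⟨mem_singles.mp hx, card_singleton x⟩
    · rintro ⟨hB, hc⟩
      obtain ⟨x, rfl⟩ := card_eq_one.mp hc
      exact ⟨x, mem_singles.mpr hB, rfl⟩
  rw [G, hB0, hfil, hdT0, himg, hsing]
  ext B
  simp only [Finset.mem_union, mem_filter]
  constructor
  · rintro (⟨h, -⟩ | ⟨h, -⟩) <;> exact h
  · intro hB
    have := card_pos.mpr (hP.1 B hB)
    rcases Nat.lt_or_ge B.card 2 with h | h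
    · exact Or.inr ⟨hB, by omega⟩
    · exact Or.inl ⟨hB, h⟩

lemma F_G {Q : Finset (Finset (Fin (n + 1)))} (hQ : IsSetPartition Q)
    (hQ2 : ∀ B ∈ Q, 2 ≤ B.card) : F (G Q) = Q := by
  have hex : ∃ B ∈ Q, Fin.last n ∈ B := by
    obtain ⟨B, ⟨hB, hl⟩, -⟩ := hQ.2 (Fin.last n)
    exact ⟨B, hB, hl⟩
  obtain ⟨hB0Q, hB0l⟩ := B0_spec hex
  have hcard_down : ∀ B ∈ Q, Fin.last n ∉ B → 2 ≤ (down B).card := by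
    intro B hB hl
    rw [card_down_of_not_mem hl]
    exact hQ2 B hB
  have hsing : singles (G Q) = down (B0 Q) := by
    ext x
    rw [mem_singles]
    constructor
    · intro h
      rcases mem_G.mp h with ⟨B, ⟨hB, hl⟩, hd⟩ | ⟨x', hx', he⟩
      · have h2 := hcard_down B hB hl
        rw [hd] at h2
        simp at h2
      · obtain rfl : x' = x := by
          have := he ▸ mem_singleton_self x'
          exact mem_singleton.mp this
        exact hx'
    · intro h
      exact mem_G.mpr (Or.inr ⟨x, h, rfl⟩)
  have hT0 : insert (Fin.last n) (up (singles (G Q))) = B0 Q := by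
    rw [hsing, up_down, insert_erase hB0l]
  have hfil : (G Q).filter (fun B => 2 ≤ B.card) =
      (Q.filter fun B => Fin.last n ∉ B).image down := by
    ext C
    simp only [mem_filter, mem_image]
    constructor
    · rintro ⟨hC, hc⟩
      rcases mem_G.mp hC with ⟨B, hB, rfl⟩ | ⟨x, -, rfl⟩
      · exact ⟨B, hB, rfl⟩
      · simp at hc
    · rintro ⟨B, hB, rfl⟩
      obtain ⟨hBQ, hl⟩ := hB
      exact ⟨mem_G.mpr (Or.inl ⟨B, ⟨hBQ, hl⟩, rfl⟩), hcard_down B hBQ hl⟩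
  have himg : ((Q.filter fun B => Fin.last n ∉ B).image down).image up =
      Q.filter fun B => Fin.last n ∉ B := by
    rw [Finset.image_image]
    have : ∀ B ∈ Q.filter fun B => Fin.last n ∉ B, (up ∘ down) B = id B := by
      intro B hB
      have hl := (mem_filter.mp hB).2
      show up (down B) = B
      rw [up_down, Finset.erase_eq_of_notMem hl]
    rw [Finset.image_congr this, Finset.image_id]
  rw [F, hT0, hfil, himg]
  ext B
  simp only [Finset.mem_insert, mem_filter]
  constructor
  · rintro (rfl | ⟨h, -⟩)
    · exact hB0Q
    · exact h
  · intro hB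
    by_cases hl : Fin.last n ∈ B
    · exact Or.inl (block_eq hQ hB hB0Q hl hB0l)
    · exact Or.inr ⟨hB, hl⟩

lemma singles_nonempty {P : Finset (Finset (Fin n))} (hP : IsSetPartition P)
    (hns : ¬ ∀ B ∈ P, 2 ≤ B.card) : (singles P).Nonempty := by
  push_neg at hns
  obtain ⟨B, hB, hc⟩ := hns
  have := card_pos.mpr (hP.1 B hB)
  have h1 : B.card = 1 := by omega
  obtain ⟨x, rfl⟩ := card_eq_one.mp h1
  exact ⟨x, mem_singles.mpr hB⟩

end BellBeta

open BellBeta in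
/-- For every `n ≥ 0`, `B n = beta (n+1) + beta n`. -/
theorem bell_eq_beta_succ_add_beta (n : ℕ) :
    bell n = beta (n + 1) + beta n := by
  classical
  have e1 : {P : Finset (Finset (Fin n)) // IsSetPartition P} ≃
      {P : Finset (Finset (Fin n)) // IsSetPartition P ∧ ∀ B ∈ P, 2 ≤ B.card} ⊕
      {P : Finset (Finset (Fin n)) // IsSetPartition P ∧ ¬ ∀ B ∈ P, 2 ≤ B.card} :=
    { toFun := fun P =>
        if h : ∀ B ∈ P.1, 2 ≤ B.card then Sum.inl ⟨P.1, P.2, h⟩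
        else Sum.inr ⟨P.1, P.2, h⟩
      invFun := Sum.elim (fun P => ⟨P.1, P.2.1⟩) (fun P => ⟨P.1, P.2.1⟩)
      left_inv := by
        intro P
        by_cases h : ∀ B ∈ P.1, 2 ≤ B.card
        · simp [dif_pos h]
        · simp [dif_neg h]
      right_inv := by
        rintro (⟨P, h1, h2⟩ | ⟨P, h1, h2⟩)
        · exact dif_pos h2
        · exact dif_neg h2 }
  have e2 : {P : Finset (Finset (Fin n)) // IsSetPartition P ∧ ¬ ∀ B ∈ P, 2 ≤ B.card} ≃
      {Q : Finset (Finset (Fin (n + 1))) // IsSetPartition Q ∧ ∀ B ∈ Q, 2 ≤ B.card} :=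
    { toFun := fun P => ⟨F P.1, F_mem P.2.1 (singles_nonempty P.2.1 P.2.2)⟩
      invFun := fun Q => ⟨G Q.1, G_mem Q.2.1 Q.2.2⟩
      left_inv := fun P => Subtype.ext (G_F P.2.1 (singles_nonempty P.2.1 P.2.2))
      right_inv := fun Q => Subtype.ext (F_G Q.2.1 Q.2.2) }
  rw [bell, beta, beta, Nat.card_congr e1, Nat.card_sum, Nat.card_congr e2, Nat.add_comm]
end

section
/- For every integer n ≥ 0, the number of singleton-free set partitions satisfies β_n = Σ_{j=0}^{n−1} (−1)^{n−1−j} B_j + (−1)^n. -/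
open Finset

namespace BetaAux

variable {n : ℕ}

/-- Lift a block from `Fin n` to `Fin (n+1)`. -/
def up (B : Finset (Fin n)) : Finset (Fin (n + 1)) := B.map Fin.castSuccEmb

/-- Pull a block down from `Fin (n+1)` to `Fin n`. -/
noncomputable def dn (C : Finset (Fin (n + 1))) : Finset (Fin n) :=
  C.preimage Fin.castSucc (Fin.castSucc_injective n).injOn

@[simp] lemma mem_up {B : Finset (Fin n)} {y : Fin n} :
    y.castSucc ∈ up B ↔ y ∈ B := by
  rw [up, show y.castSucc = Fin.castSuccEmb y from rfl, Finset.mem_map']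

lemma last_not_mem_up {B : Finset (Fin n)} : Fin.last n ∉ up B := by
  simp only [up, mem_map]
  rintro ⟨y, -, hy⟩
  exact absurd hy (Fin.castSucc_lt_last y).ne

@[simp] lemma mem_dn {C : Finset (Fin (n + 1))} {y : Fin n} :
    y ∈ dn C ↔ y.castSucc ∈ C := Finset.mem_preimage

lemma up_dn {C : Finset (Fin (n + 1))} (h : Fin.last n ∉ C) : up (dn C) = C := by
  ext x
  rcases eq_or_ne x (Fin.last n) with rfl | hx
  · simp [last_not_mem_up, h]
  · obtain ⟨y, rfl⟩ := Fin.exists_castSucc_eq.2 hx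
    simp

lemma dn_up (B : Finset (Fin n)) : dn (up B) = B := by
  ext y; simp

lemma up_injective : Function.Injective (up (n := n)) :=
  fun _ _ h => Finset.map_injective _ h

@[simp] lemma card_up (B : Finset (Fin n)) : (up B).card = B.card := Finset.card_map _

lemma card_dn {C : Finset (Fin (n + 1))} (h : Fin.last n ∉ C) : (dn C).card = C.card := by
  rw [← card_up (dn C), up_dn h]

/-- The set of elements that form singleton blocks of `P`. -/
def sing (P : Finset (Finset (Fin n))) : Finset (Fin n) :=
  Finset.univ.filter fun y => ({y} : Finset (Fin n)) ∈ P

@[simp] lemma mem_sing {P : Finset (Finset (Fin n))} {y : Fin n} :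
    y ∈ sing P ↔ ({y} : Finset (Fin n)) ∈ P := by simp [sing]

/-- The special block of `F P` : the singletons' elements together with `last n`. -/
def T (P : Finset (Finset (Fin n))) : Finset (Fin (n + 1)) :=
  insert (Fin.last n) (up (sing P))

/-- The forward map: from partitions of `Fin n` with at least one singleton to
singleton-free partitions of `Fin (n+1)`. -/
def F (P : Finset (Finset (Fin n))) : Finset (Finset (Fin (n + 1))) :=
  (P.filter fun B => 2 ≤ B.card).image up ∪ {T P}

lemma mem_F {P : Finset (Finset (Fin n))} {C : Finset (Fin (n + 1))} :
    C ∈ F P ↔ (∃ B ∈ P, 2 ≤ B.card ∧ up B = C) ∨ C = T P := by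
  simp [F, and_assoc, or_comm]

lemma last_mem_T {P : Finset (Finset (Fin n))} : Fin.last n ∈ T P := mem_insert_self _ _

lemma castSucc_mem_T {P : Finset (Finset (Fin n))} {y : Fin n} :
    y.castSucc ∈ T P ↔ ({y} : Finset (Fin n)) ∈ P := by
  simp [T, (Fin.castSucc_lt_last y).ne]

/-- Key uniqueness: in a partition, blocks sharing a point are equal. -/
lemma block_eq {P : Finset (Finset (Fin n))} (hP : IsSetPartition P)
    {B C : Finset (Fin n)} {x : Fin n} (hB : B ∈ P) (hxB : x ∈ B) (hC : C ∈ P)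
    (hxC : x ∈ C) : B = C := by
  obtain ⟨D, -, hD⟩ := hP.2 x
  rw [hD B ⟨hB, hxB⟩, hD C ⟨hC, hxC⟩]

lemma singleton_block_of_card_le_one {P : Finset (Finset (Fin n))} (hP : IsSetPartition P)
    {B : Finset (Fin n)} (hB : B ∈ P) (h : B.card ≤ 1) : ∃ y, B = {y} ∧ y ∈ B := by
  obtain ⟨y, hy⟩ := hP.1 B hB
  exact ⟨y, Finset.eq_singleton_iff_unique_mem.2 ⟨hy, fun z hz =>
    Finset.card_le_one.1 h z hz y hy⟩, hy⟩

lemma F_partition {P : Finset (Finset (Fin n))} (hP : IsSetPartition P)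
    (hs : ¬ ∀ B ∈ P, 2 ≤ B.card) :
    IsSetPartition (F P) ∧ ∀ C ∈ F P, 2 ≤ C.card := by
  -- `sing P` is nonempty
  have hsing : (sing P).Nonempty := by
    push_neg at hs
    obtain ⟨B, hB, hcard⟩ := hs
    obtain ⟨y, rfl, hy⟩ := singleton_block_of_card_le_one hP hB (by omega)
    exact ⟨y, mem_sing.2 hB⟩
  have hTcard : 2 ≤ (T P).card := by
    rw [T, Finset.card_insert_of_notMem last_not_mem_up, card_up]
    have := Finset.card_pos.2 hsing
    omega
  refine ⟨⟨?_, ?_⟩, ?_⟩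
  · rintro C hC
    rcases mem_F.1 hC with ⟨B, hB, h2, rfl⟩ | rfl
    · exact Finset.card_pos.1 (by rw [card_up]; omega)
    · exact ⟨_, last_mem_T⟩
  · intro x
    rcases eq_or_ne x (Fin.last n) with rfl | hx
    · refine ⟨T P, ⟨mem_F.2 (Or.inr rfl), last_mem_T⟩, ?_⟩
      rintro C ⟨hC, hlC⟩
      rcases mem_F.1 hC with ⟨B, hB, h2, rfl⟩ | rfl
      · exact absurd hlC last_not_mem_up
      · rfl
    · obtain ⟨y, rfl⟩ := Fin.exists_castSucc_eq.2 hx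
      obtain ⟨B, ⟨hB, hyB⟩, hBu⟩ := hP.2 y
      by_cases h2 : 2 ≤ B.card
      · refine ⟨up B, ⟨mem_F.2 (Or.inl ⟨B, hB, h2, rfl⟩), mem_up.2 hyB⟩, ?_⟩
        rintro C ⟨hC, hyC⟩
        rcases mem_F.1 hC with ⟨B', hB', h2', rfl⟩ | rfl
        · rw [block_eq hP hB' (mem_up.1 hyC) hB hyB]
        · have hyP : ({y} : Finset (Fin n)) ∈ P := castSucc_mem_T.1 hyC
          have := block_eq hP hyP (Finset.mem_singleton_self y) hB hyB
          rw [← this] at h2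
          simp at h2
      · obtain ⟨z, rfl, hz⟩ := singleton_block_of_card_le_one hP hB (by omega)
        obtain rfl : z = y := Finset.mem_singleton.1 hyB |>.symm
        refine ⟨T P, ⟨mem_F.2 (Or.inr rfl), castSucc_mem_T.2 hB⟩, ?_⟩
        rintro C ⟨hC, hyC⟩
        rcases mem_F.1 hC with ⟨B', hB', h2', rfl⟩ | rfl
        · have := block_eq hP hB' (mem_up.1 hyC) hB hyB
          rw [this] at h2'
          simp at h2'
        · rfl
  · intro C hC
    rcases mem_F.1 hC with ⟨B, hB, h2, rfl⟩ | rfl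
    · rwa [card_up]
    · exact hTcard

lemma F_injective {P₁ P₂ : Finset (Finset (Fin n))} (h₁ : IsSetPartition P₁)
    (h₂ : IsSetPartition P₂) (h : F P₁ = F P₂) : P₁ = P₂ := by
  have key : ∀ P Q : Finset (Finset (Fin n)), IsSetPartition P → IsSetPartition Q →
      F P = F Q → ∀ B ∈ P, B ∈ Q := by
    intro P Q hP hQ hFQ B hB
    by_cases h2 : 2 ≤ B.card
    · have : up B ∈ F Q := by rw [← hFQ]; exact mem_F.2 (Or.inl ⟨B, hB, h2, rfl⟩)
      rcases mem_F.1 this with ⟨B', hB', h2', hup⟩ | hT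
      · rwa [← up_injective hup]
      · exact absurd (hT ▸ last_not_mem_up) (fun hf => hf last_mem_T)
    · obtain ⟨y, rfl, hy⟩ := singleton_block_of_card_le_one hP hB (by omega)
      have hTT : T P ∈ F Q := by rw [← hFQ]; exact mem_F.2 (Or.inr rfl)
      have hTeq : T P = T Q := by
        rcases mem_F.1 hTT with ⟨B', hB', h2', hup⟩ | hT
        · exact absurd (hup ▸ last_not_mem_up) (fun hf => hf last_mem_T)
        · exact hT
      have : y.castSucc ∈ T Q := hTeq ▸ castSucc_mem_T.2 hB
      exact castSucc_mem_T.1 this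
  exact Finset.Subset.antisymm (fun B hB => key P₁ P₂ h₁ h₂ h B hB)
    (fun B hB => key P₂ P₁ h₂ h₁ h.symm B hB)

lemma F_surjective {Q : Finset (Finset (Fin (n + 1)))} (hQ : IsSetPartition Q)
    (hsf : ∀ C ∈ Q, 2 ≤ C.card) :
    ∃ P : Finset (Finset (Fin n)),
      (IsSetPartition P ∧ ¬ ∀ B ∈ P, 2 ≤ B.card) ∧ F P = Q := by
  classical
  obtain ⟨B₀, ⟨hB₀, hlast⟩, hu⟩ := hQ.2 (Fin.last n)
  have hu' : ∀ C ∈ Q, Fin.last n ∈ C → C = B₀ := fun C hC hl => hu C ⟨hC, hl⟩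
  have hlastE : ∀ C ∈ Q.erase B₀, Fin.last n ∉ C := by
    intro C hC hl
    exact (Finset.ne_of_mem_erase hC) (hu' C (Finset.mem_of_mem_erase hC) hl)
  set S : Finset (Fin n) := dn (B₀.erase (Fin.last n)) with hS
  have hupS : up S = B₀.erase (Fin.last n) :=
    up_dn (Finset.notMem_erase _ _)
  have hSne : S.Nonempty := by
    have h2 : 2 ≤ B₀.card := hsf B₀ hB₀
    have : (B₀.erase (Fin.last n)).card = B₀.card - 1 :=
      Finset.card_erase_of_mem hlast
    have hpos : 0 < (up S).card := by rw [hupS, this]; omega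
    rw [card_up] at hpos
    exact Finset.card_pos.1 hpos
  set P : Finset (Finset (Fin n)) :=
    ((Q.erase B₀).image dn) ∪ S.image (fun y => ({y} : Finset (Fin n))) with hP
  have memP : ∀ B : Finset (Fin n),
      B ∈ P ↔ (∃ C ∈ Q.erase B₀, dn C = B) ∨ ∃ y ∈ S, ({y} : Finset (Fin n)) = B := by
    intro B; simp [hP]
  have hdn_card : ∀ C ∈ Q.erase B₀, (dn C).card = C.card := fun C hC =>
    card_dn (hlastE C hC)
  -- membership of points in blocks of P
  have hmempt : ∀ (y : Fin n) (C : Finset (Fin (n+1))), C ∈ Q.erase B₀ →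
      (y ∈ dn C ↔ y.castSucc ∈ C) := fun y C hC => mem_dn
  have hSmem : ∀ y : Fin n, y ∈ S ↔ y.castSucc ∈ B₀ := by
    intro y
    rw [hS, mem_dn, Finset.mem_erase]
    simp [(Fin.castSucc_lt_last y).ne]
  have hpart : IsSetPartition P := by
    constructor
    · intro B hB
      rcases (memP B).1 hB with ⟨C, hC, rfl⟩ | ⟨y, hy, rfl⟩
      · have := hdn_card C hC
        have h2 := hsf C (Finset.mem_of_mem_erase hC)
        exact Finset.card_pos.1 (by omega)
      · exact ⟨y, Finset.mem_singleton_self y⟩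
    · intro y
      obtain ⟨C, ⟨hC, hyC⟩, hCu⟩ := hQ.2 y.castSucc
      by_cases hCB : C = B₀
      · subst hCB
        refine ⟨{y}, ⟨(memP _).2 (Or.inr ⟨y, (hSmem y).2 hyC, rfl⟩),
          Finset.mem_singleton_self y⟩, ?_⟩
        rintro B ⟨hB, hyB⟩
        rcases (memP B).1 hB with ⟨C', hC', rfl⟩ | ⟨y', hy', rfl⟩
        · have h1 : y.castSucc ∈ C' := mem_dn.1 hyB
          exact absurd (hCu C' ⟨Finset.mem_of_mem_erase hC', h1⟩)
            (Finset.ne_of_mem_erase hC')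
        · obtain rfl := Finset.mem_singleton.1 hyB
          rfl
      · refine ⟨dn C, ⟨(memP _).2 (Or.inl ⟨C, Finset.mem_erase.2 ⟨hCB, hC⟩, rfl⟩),
          mem_dn.2 hyC⟩, ?_⟩
        rintro B ⟨hB, hyB⟩
        rcases (memP B).1 hB with ⟨C', hC', rfl⟩ | ⟨y', hy', rfl⟩
        · have h1 : y.castSucc ∈ C' := mem_dn.1 hyB
          rw [hCu C' ⟨Finset.mem_of_mem_erase hC', h1⟩]
        · obtain rfl := Finset.mem_singleton.1 hyB
          have : y.castSucc ∈ B₀ := (hSmem y).1 hy'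
          exact absurd (hCu B₀ ⟨hB₀, this⟩).symm hCB
  have hsingP : sing P = S := by
    ext y
    rw [mem_sing]
    constructor
    · intro hy
      rcases (memP _).1 hy with ⟨C, hC, hdC⟩ | ⟨y', hy', he⟩
      · have := hdn_card C hC
        have h2 := hsf C (Finset.mem_of_mem_erase hC)
        rw [hdC, Finset.card_singleton] at this
        omega
      · obtain rfl : y' = y := by
          have := he ▸ Finset.mem_singleton_self y'
          exact Finset.mem_singleton.1 (he ▸ Finset.mem_singleton_self y')
        exact hy'
    · intro hy
      exact (memP _).2 (Or.inr ⟨y, hy, rfl⟩)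
  have hfilter : P.filter (fun B => 2 ≤ B.card) = (Q.erase B₀).image dn := by
    ext B
    rw [Finset.mem_filter]
    constructor
    · rintro ⟨hB, h2⟩
      rcases (memP B).1 hB with ⟨C, hC, rfl⟩ | ⟨y, hy, rfl⟩
      · exact Finset.mem_image.2 ⟨C, hC, rfl⟩
      · simp at h2
    · intro hB
      obtain ⟨C, hC, rfl⟩ := Finset.mem_image.1 hB
      exact ⟨(memP _).2 (Or.inl ⟨C, hC, rfl⟩),
        by rw [hdn_card C hC]; exact hsf C (Finset.mem_of_mem_erase hC)⟩
  have hFP : F P = Q := by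
    have hTP : T P = B₀ := by
      rw [T, hsingP, hupS, Finset.insert_erase hlast]
    have himg : ((Q.erase B₀).image dn).image up = Q.erase B₀ := by
      rw [Finset.image_image]
      ext C
      simp only [Finset.mem_image, Function.comp]
      constructor
      · rintro ⟨D, hD, rfl⟩
        rw [up_dn (hlastE D hD)]
        exact hD
      · intro hC
        exact ⟨C, hC, up_dn (hlastE C hC)⟩
    rw [F, hfilter, himg, hTP]
    rw [Finset.union_comm, ← Finset.insert_eq, Finset.insert_erase hB₀]
  refine ⟨P, ⟨hpart, ?_⟩, hFP⟩
  intro hall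
  obtain ⟨y, hy⟩ := hSne
  have : ({y} : Finset (Fin n)) ∈ P := (memP _).2 (Or.inr ⟨y, hy, rfl⟩)
  have := hall _ this
  simp at this

end BetaAux

open BetaAux in
lemma bell_eq_beta_add (n : ℕ) : bell n = beta n + beta (n + 1) := by
  classical
  have h1 : Nat.card {P : Finset (Finset (Fin n)) //
      IsSetPartition P ∧ ¬ ∀ B ∈ P, 2 ≤ B.card} = beta (n + 1) := by
    rw [beta]
    refine Nat.card_eq_of_bijective
      (fun P => ⟨F P.1, (F_partition P.2.1 P.2.2).1, (F_partition P.2.1 P.2.2).2⟩) ⟨?_, ?_⟩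
    · rintro ⟨P₁, h₁⟩ ⟨P₂, h₂⟩ h
      exact Subtype.ext (F_injective h₁.1 h₂.1 (congrArg Subtype.val h))
    · rintro ⟨Q, hQ⟩
      obtain ⟨P, hP, hFP⟩ := F_surjective hQ.1 hQ.2
      exact ⟨⟨P, hP⟩, Subtype.ext hFP⟩
  have h2 : bell n = beta n +
      Nat.card {P : Finset (Finset (Fin n)) // IsSetPartition P ∧ ¬ ∀ B ∈ P, 2 ≤ B.card} := by
    rw [bell, beta, ← Nat.card_sum]
    refine Nat.card_congr ?_ |>.symm
    refine Equiv.trans (Equiv.sumCongr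
      (Equiv.subtypeSubtypeEquivSubtypeInter (IsSetPartition) (fun P => ∀ B ∈ P, 2 ≤ B.card)).symm
      (Equiv.subtypeSubtypeEquivSubtypeInter (IsSetPartition)
        (fun P => ¬ ∀ B ∈ P, 2 ≤ B.card)).symm) ?_
    exact Equiv.sumCompl _
  rw [h2, h1]

/-- For every `n ≥ 0`, `beta n = ∑_{j=0}^{n-1} (-1)^(n-1-j) * B j + (-1)^n`. -/
theorem beta_eq_alternating_bell_sum (n : ℕ) :
    (beta n : ℤ) =
      (∑ j ∈ Finset.range n, (-1 : ℤ) ^ (n - 1 - j) * (bell j : ℤ)) + (-1 : ℤ) ^ n := by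
  induction n with
  | zero => simp [beta_zero]
  | succ n ih =>
    have key : (bell n : ℤ) = (beta n : ℤ) + (beta (n + 1) : ℤ) := by
      exact_mod_cast congrArg (Nat.cast (R := ℤ)) (bell_eq_beta_add n)
    have hs : ∑ j ∈ Finset.range n, (-1 : ℤ) ^ (n - j) * (bell j : ℤ)
        = -∑ j ∈ Finset.range n, (-1 : ℤ) ^ (n - 1 - j) * (bell j : ℤ) := by
      rw [← Finset.sum_neg_distrib]
      refine Finset.sum_congr rfl fun j hj => ?_
      have hj' := Finset.mem_range.1 hj
      have h : n - j = (n - 1 - j) + 1 := by omega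
      rw [h, pow_succ]
      ring
    have hexp : ∀ j, n + 1 - 1 - j = n - j := fun j => by omega
    simp only [hexp]
    rw [Finset.sum_range_succ, hs, Nat.sub_self, pow_zero, one_mul, pow_succ]
    linarith [key, ih]
end

section
/- For every integer n ≥ 3 one has β_{n+1}/(n+1) ≥ β_n/n; that is, the sequence β_n/n is nondecreasing for n ≥ 3. -/
open Finset

namespace BM
variable {m : ℕ}

def up (B : Finset (Fin m)) : Finset (Fin (m+1)) := B.image Fin.castSucc
lemma mem_up_iff {B : Finset (Fin m)} {i : Fin m} : i.castSucc ∈ up B ↔ i ∈ B := by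
  constructor
  · intro h
    obtain ⟨a, ha, hai⟩ := Finset.mem_image.1 h
    rwa [← Fin.castSucc_inj.1 hai]
  · intro h; exact Finset.mem_image_of_mem _ h
lemma last_not_mem_up {B : Finset (Fin m)} : Fin.last m ∉ up B := by
  intro h
  obtain ⟨a, _, ha⟩ := Finset.mem_image.1 h
  exact (Fin.castSucc_lt_last a).ne ha
lemma card_up (B : Finset (Fin m)) : (up B).card = B.card :=
  Finset.card_image_of_injective _ (Fin.castSucc_injective m)
lemma up_injective : Function.Injective (up (m := m)) := by
  intro B C h; ext i; rw [← mem_up_iff, h, mem_up_iff]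

def lift (P : Finset (Finset (Fin m))) (B₀ : Finset (Fin m)) : Finset (Finset (Fin (m+1))) :=
  insert (insert (Fin.last m) (up B₀)) ((P.erase B₀).image up)

lemma bigblock_mem (P : Finset (Finset (Fin m))) (B₀ : Finset (Fin m)) :
    insert (Fin.last m) (up B₀) ∈ lift P B₀ := Finset.mem_insert_self _ _

lemma eq_bigblock_of_last_mem {P : Finset (Finset (Fin m))} {B₀ : Finset (Fin m)}
    {B : Finset (Fin (m+1))} (hB : B ∈ lift P B₀) (hl : Fin.last m ∈ B) :
    B = insert (Fin.last m) (up B₀) := by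
  rcases Finset.mem_insert.1 hB with rfl | hB
  · rfl
  · obtain ⟨C, _, rfl⟩ := Finset.mem_image.1 hB
    exact absurd hl last_not_mem_up

lemma card_bigblock (B₀ : Finset (Fin m)) :
    (insert (Fin.last m) (up B₀)).card = B₀.card + 1 := by
  rw [Finset.card_insert_of_notMem last_not_mem_up, card_up]

lemma bigblock_notMem_image {B₀ : Finset (Fin m)} {S : Finset (Finset (Fin m))} :
    insert (Fin.last m) (up B₀) ∉ S.image up := by
  intro h
  obtain ⟨C, _, hC⟩ := Finset.mem_image.1 h
  exact last_not_mem_up (hC ▸ Finset.mem_insert_self _ _)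

lemma lift_inj {P P' : Finset (Finset (Fin m))} {B₀ B₀' : Finset (Fin m)}
    (hB₀ : B₀ ∈ P) (hB₀' : B₀' ∈ P') (h : lift P B₀ = lift P' B₀') : P = P' := by
  have hbig : insert (Fin.last m) (up B₀) = insert (Fin.last m) (up B₀') := by
    have := bigblock_mem P' B₀'
    rw [← h] at this
    exact (eq_bigblock_of_last_mem this (Finset.mem_insert_self _ _)).symm
  have hB0eq : B₀ = B₀' := by
    apply up_injective
    have h1 : up B₀ = (insert (Fin.last m) (up B₀)).erase (Fin.last m) :=
      (Finset.erase_insert last_not_mem_up).symm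
    rw [h1, hbig, Finset.erase_insert last_not_mem_up]
  subst hB0eq
  have himg : (P.erase B₀).image up = (P'.erase B₀).image up := by
    have h1 := congrArg (fun S => Finset.erase S (insert (Fin.last m) (up B₀))) h
    simpa [lift, Finset.erase_insert bigblock_notMem_image] using h1
  have := Finset.image_injective up_injective himg
  rw [← Finset.insert_erase hB₀, ← Finset.insert_erase hB₀', this]

lemma isSetPartition_lift {P : Finset (Finset (Fin m))} (hP : IsSetPartition P)
    {B₀ : Finset (Fin m)} (hB₀ : B₀ ∈ P) : IsSetPartition (lift P B₀) := by
  constructor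
  · intro B hB
    rcases Finset.mem_insert.1 hB with rfl | hB
    · exact ⟨_, Finset.mem_insert_self _ _⟩
    · obtain ⟨C, hC, rfl⟩ := Finset.mem_image.1 hB
      exact (hP.1 C (Finset.mem_of_mem_erase hC)).image _
  · intro x
    induction x using Fin.lastCases with
    | last =>
      refine ⟨insert (Fin.last m) (up B₀),
        ⟨Finset.mem_insert_self _ _, Finset.mem_insert_self _ _⟩, ?_⟩
      rintro B ⟨hB, hlast⟩
      exact eq_bigblock_of_last_mem hB hlast
    | cast i =>
      obtain ⟨B, ⟨hBP, hiB⟩, huniq⟩ := hP.2 i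
      by_cases hB0 : B = B₀
      · subst hB0
        refine ⟨insert (Fin.last m) (up B),
          ⟨Finset.mem_insert_self _ _, Finset.mem_insert_of_mem (mem_up_iff.2 hiB)⟩, ?_⟩
        rintro B' ⟨hB', hiB'⟩
        rcases Finset.mem_insert.1 hB' with rfl | hB'
        · rfl
        · obtain ⟨C, hC, rfl⟩ := Finset.mem_image.1 hB'
          exact absurd (huniq C ⟨Finset.mem_of_mem_erase hC, mem_up_iff.1 hiB'⟩)
            (Finset.ne_of_mem_erase hC)
      · refine ⟨up B, ⟨Finset.mem_insert_of_mem
          (Finset.mem_image_of_mem _ (Finset.mem_erase.2 ⟨hB0, hBP⟩)), mem_up_iff.2 hiB⟩, ?_⟩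
        rintro B' ⟨hB', hiB'⟩
        rcases Finset.mem_insert.1 hB' with rfl | hB'
        · rcases Finset.mem_insert.1 hiB' with h | h
          · exact absurd h (Fin.castSucc_lt_last i).ne
          · exact absurd (huniq B₀ ⟨hB₀, mem_up_iff.1 h⟩).symm hB0
        · obtain ⟨C, hC, rfl⟩ := Finset.mem_image.1 hB'
          rw [huniq C ⟨Finset.mem_of_mem_erase hC, mem_up_iff.1 hiB'⟩]

lemma card_lift {P : Finset (Finset (Fin m))} (h2 : ∀ B ∈ P, 2 ≤ B.card)
    {B₀ : Finset (Fin m)} (hB₀ : B₀ ∈ P) : ∀ B ∈ lift P B₀, 2 ≤ B.card := by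
  intro B hB
  rcases Finset.mem_insert.1 hB with rfl | hB
  · rw [card_bigblock]
    exact le_trans (h2 B₀ hB₀) (Nat.le_succ _)
  · obtain ⟨C, hC, rfl⟩ := Finset.mem_image.1 hB
    rw [card_up]
    exact h2 C (Finset.mem_of_mem_erase hC)

noncomputable def blk {k : ℕ} (P : Finset (Finset (Fin k))) (hP : IsSetPartition P)
    (x : Fin k) : Finset (Fin k) := (hP.2 x).exists.choose

lemma blk_spec {k : ℕ} (P : Finset (Finset (Fin k))) (hP : IsSetPartition P) (x : Fin k) :
    blk P hP x ∈ P ∧ x ∈ blk P hP x := (hP.2 x).exists.choose_spec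

lemma blk_unique {k : ℕ} {P : Finset (Finset (Fin k))} (hP : IsSetPartition P) {x : Fin k}
    {B : Finset (Fin k)} (h1 : B ∈ P) (h2 : x ∈ B) : B = blk P hP x :=
  (hP.2 x).unique ⟨h1, h2⟩ (blk_spec P hP x)

lemma eq_singleton_univ {k : ℕ} {P : Finset (Finset (Fin k))} (hP : IsSetPartition P)
    (h : (univ : Finset (Fin k)) ∈ P) : P = {univ} := by
  apply Finset.eq_singleton_iff_unique_mem.2
  refine ⟨h, fun B hB => ?_⟩
  obtain ⟨x, hx⟩ := hP.1 B hB
  exact ((hP.2 x).unique ⟨hB, hx⟩ ⟨h, Finset.mem_univ x⟩)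

/-! ### The maps -/

def Qspec (m : ℕ) : Finset (Finset (Fin (m+3+1))) :=
  insert {Fin.castSucc (0 : Fin (m+3)), Fin.last (m+3)}
    {((univ : Finset (Fin (m+3+1))).erase (Fin.castSucc (0 : Fin (m+3)))).erase (Fin.last (m+3))}

lemma c0_ne_last : Fin.castSucc (0 : Fin (m+3)) ≠ Fin.last (m+3) :=
  (Fin.castSucc_lt_last _).ne

lemma X_mem_Qspec : ({Fin.castSucc (0 : Fin (m+3)), Fin.last (m+3)} : Finset (Fin (m+3+1))) ∈ Qspec m :=
  Finset.mem_insert_self _ _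

lemma card_X : ({Fin.castSucc (0 : Fin (m+3)), Fin.last (m+3)} : Finset (Fin (m+3+1))).card = 2 := by
  rw [Finset.card_insert_of_notMem (by simp [c0_ne_last]), Finset.card_singleton]

lemma last_mem_X : Fin.last (m+3) ∈ ({Fin.castSucc (0 : Fin (m+3)), Fin.last (m+3)} : Finset (Fin (m+3+1))) :=
  Finset.mem_insert_of_mem (Finset.mem_singleton_self _)

lemma isSetPartition_Qspec : IsSetPartition (Qspec m) := by
  constructor
  · intro B hB
    rcases Finset.mem_insert.1 hB with rfl | hB
    · exact ⟨_, Finset.mem_insert_self _ _⟩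
    · rw [Finset.mem_singleton.1 hB]
      refine Finset.card_pos.1 ?_
      rw [Finset.card_erase_of_mem (Finset.mem_erase.2 ⟨(c0_ne_last).symm, Finset.mem_univ _⟩),
        Finset.card_erase_of_mem (Finset.mem_univ _), Finset.card_univ, Fintype.card_fin]
      omega
  · intro x
    by_cases hx : x = Fin.castSucc (0 : Fin (m+3)) ∨ x = Fin.last (m+3)
    · refine ⟨_, ⟨X_mem_Qspec, ?_⟩, ?_⟩
      · rcases hx with rfl | rfl
        · exact Finset.mem_insert_self _ _
        · exact last_mem_X
      · rintro B ⟨hB, hxB⟩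
        rcases Finset.mem_insert.1 hB with rfl | hB
        · rfl
        · rw [Finset.mem_singleton.1 hB] at hxB
          rcases hx with rfl | rfl
          · exact absurd (Finset.mem_erase.1 (Finset.mem_of_mem_erase hxB)).1 (by simp)
          · exact absurd (Finset.mem_erase.1 hxB).1 (by simp)
    · push_neg at hx
      refine ⟨_, ⟨Finset.mem_insert_of_mem (Finset.mem_singleton_self _),
        Finset.mem_erase.2 ⟨hx.2, Finset.mem_erase.2 ⟨hx.1, Finset.mem_univ _⟩⟩⟩, ?_⟩
      rintro B ⟨hB, hxB⟩
      rcases Finset.mem_insert.1 hB with rfl | hB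
      · rcases Finset.mem_insert.1 hxB with rfl | h
        · exact absurd rfl hx.1
        · exact absurd (Finset.mem_singleton.1 h) hx.2
      · exact Finset.mem_singleton.1 hB

lemma card_Qspec : ∀ B ∈ Qspec m, 2 ≤ B.card := by
  intro B hB
  rcases Finset.mem_insert.1 hB with rfl | hB
  · rw [card_X]
  · rw [Finset.mem_singleton.1 hB,
      Finset.card_erase_of_mem (Finset.mem_erase.2 ⟨(c0_ne_last).symm, Finset.mem_univ _⟩),
      Finset.card_erase_of_mem (Finset.mem_univ _), Finset.card_univ, Fintype.card_fin]
    omega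

noncomputable def pick (P : Finset (Finset (Fin (m+3)))) (hP : IsSetPartition P)
    (h : (univ : Finset (Fin (m+3))) ∉ P) : Fin (m+3) :=
  (univ \ blk P hP 0).min' (by
    rw [Finset.sdiff_nonempty]
    intro hsub
    exact h ((Finset.univ_subset_iff.1 hsub) ▸ (blk_spec P hP 0).1))

lemma pick_notMem_blk0 (P : Finset (Finset (Fin (m+3)))) (hP : IsSetPartition P)
    (h : (univ : Finset (Fin (m+3))) ∉ P) : pick P hP h ∉ blk P hP 0 :=
  (Finset.mem_sdiff.1 (Finset.min'_mem _ _)).2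

lemma zero_notMem_blkpick (P : Finset (Finset (Fin (m+3)))) (hP : IsSetPartition P)
    (h : (univ : Finset (Fin (m+3))) ∉ P) : (0 : Fin (m+3)) ∉ blk P hP (pick P hP h) := by
  intro h0
  have := blk_unique hP (blk_spec P hP (pick P hP h)).1 h0
  exact pick_notMem_blk0 P hP h (this ▸ (blk_spec P hP (pick P hP h)).2)

noncomputable def f0 (P : Finset (Finset (Fin (m+3)))) (hP : IsSetPartition P) :
    Finset (Finset (Fin (m+3+1))) := lift P (blk P hP 0)

noncomputable def f1 (P : Finset (Finset (Fin (m+3)))) (hP : IsSetPartition P) :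
    Finset (Finset (Fin (m+3+1))) :=
  if h : (univ : Finset (Fin (m+3))) ∈ P then Qspec m
  else lift P (blk P hP (pick P hP h))

/-- A lift of a singleton-free partition contains no block of card 2 containing `last`. -/
lemma no_small_last_block {P : Finset (Finset (Fin m))} (h2 : ∀ B ∈ P, 2 ≤ B.card)
    {B₀ : Finset (Fin m)} (hB₀ : B₀ ∈ P) {X : Finset (Fin (m+1))}
    (hX : X ∈ lift P B₀) (hl : Fin.last m ∈ X) (hc : X.card = 2) : False := by
  have hb := eq_bigblock_of_last_mem hX hl
  rw [hb, card_bigblock] at hc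
  have := h2 B₀ hB₀
  omega

lemma Qspec_ne_lift {P : Finset (Finset (Fin (m+3)))} (h2 : ∀ B ∈ P, 2 ≤ B.card)
    {B₀ : Finset (Fin (m+3))} (hB₀ : B₀ ∈ P) : Qspec m ≠ lift P B₀ := by
  intro h
  exact no_small_last_block h2 hB₀ (h ▸ X_mem_Qspec) last_mem_X card_X

lemma f0_ne_liftpick {P P' : Finset (Finset (Fin (m+3)))} (hP : IsSetPartition P)
    (hP' : IsSetPartition P') (h' : (univ : Finset (Fin (m+3))) ∉ P') :
    f0 P hP ≠ lift P' (blk P' hP' (pick P' hP' h')) := by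
  intro h
  set B₀' := blk P' hP' (pick P' hP' h') with hB₀'
  have h1 : insert (Fin.last (m+3)) (up B₀') ∈ f0 P hP := h ▸ bigblock_mem P' B₀'
  have h2 : insert (Fin.last (m+3)) (up B₀') = insert (Fin.last (m+3)) (up (blk P hP 0)) :=
    eq_bigblock_of_last_mem h1 (Finset.mem_insert_self _ _)
  have hc0 : Fin.castSucc (0 : Fin (m+3)) ∈ insert (Fin.last (m+3)) (up B₀') := by
    rw [h2]
    exact Finset.mem_insert_of_mem (mem_up_iff.2 (blk_spec P hP 0).2)
  rcases Finset.mem_insert.1 hc0 with h3 | h3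
  · exact c0_ne_last h3
  · exact zero_notMem_blkpick P' hP' h' (mem_up_iff.1 h3)

noncomputable def F (m : ℕ) :
    Bool × {P : Finset (Finset (Fin (m+3))) // IsSetPartition P ∧ ∀ B ∈ P, 2 ≤ B.card} →
    {P : Finset (Finset (Fin (m+3+1))) // IsSetPartition P ∧ ∀ B ∈ P, 2 ≤ B.card}
  | (false, ⟨P, hP, h2⟩) =>
    ⟨f0 P hP, isSetPartition_lift hP (blk_spec P hP 0).1, card_lift h2 (blk_spec P hP 0).1⟩
  | (true, ⟨P, hP, h2⟩) =>
    ⟨f1 P hP, by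
      unfold f1
      split
      · exact ⟨isSetPartition_Qspec, card_Qspec⟩
      · exact ⟨isSetPartition_lift hP (blk_spec P hP _).1, card_lift h2 (blk_spec P hP _).1⟩⟩

lemma F_inj (m : ℕ) : Function.Injective (F m) := by
  rintro ⟨b, P, hP, h2⟩ ⟨b', P', hP', h2'⟩ h
  cases b <;> cases b'
  · have hv : f0 P hP = f0 P' hP' := congrArg Subtype.val h
    obtain rfl := lift_inj (blk_spec P hP 0).1 (blk_spec P' hP' 0).1 hv
    rfl
  · have hv : f0 P hP = f1 P' hP' := congrArg Subtype.val h
    exfalso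
    unfold f1 at hv
    split at hv
    · next h' =>
      obtain rfl := eq_singleton_univ hP' h'
      exact Qspec_ne_lift h2 (blk_spec P hP 0).1 hv.symm
    · next h' => exact f0_ne_liftpick hP hP' h' hv
  · have hv : f1 P hP = f0 P' hP' := congrArg Subtype.val h
    exfalso
    unfold f1 at hv
    split at hv
    · next h' => exact Qspec_ne_lift h2' (blk_spec P' hP' 0).1 hv
    · next h' => exact f0_ne_liftpick hP' hP h' hv.symm
  · have hv : f1 P hP = f1 P' hP' := congrArg Subtype.val h
    unfold f1 at hv
    split at hv <;> split at hv
    · next hu hu' =>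
      obtain rfl : P = P' := by rw [eq_singleton_univ hP hu, eq_singleton_univ hP' hu']
      rfl
    · next hu hu' => exact absurd hv (Qspec_ne_lift h2' (blk_spec P' hP' _).1)
    · next hu hu' => exact absurd hv.symm (Qspec_ne_lift h2 (blk_spec P hP _).1)
    · next hu hu' =>
      obtain rfl := lift_inj (blk_spec P hP _).1 (blk_spec P' hP' _).1 hv
      rfl

lemma two_mul_beta_le (m : ℕ) : 2 * beta (m+3) ≤ beta (m+3+1) := by
  have h1 : Nat.card (Bool ×
      {P : Finset (Finset (Fin (m+3))) // IsSetPartition P ∧ ∀ B ∈ P, 2 ≤ B.card}) =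
      2 * beta (m+3) := by
    rw [Nat.card_prod, beta]
    simp [Nat.card_eq_fintype_card]
  calc 2 * beta (m+3) = _ := h1.symm
    _ ≤ beta (m+3+1) := Nat.card_le_card_of_injective (F m) (F_inj m)

end BM

/-- For `n ≥ 3`, the sequence `beta n / n` is nondecreasing:
`beta (n+1) / (n+1) ≥ beta n / n`. -/
theorem beta_div_monotone (n : ℕ) (hn : 3 ≤ n) :
    (beta n : ℚ) / (n : ℚ) ≤ (beta (n + 1) : ℚ) / ((n : ℚ) + 1) := by
  obtain ⟨m, rfl⟩ : ∃ m, n = m + 3 := ⟨n - 3, by omega⟩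
  have key := BM.two_mul_beta_le m
  have hk : (2 * beta (m+3) : ℚ) ≤ (beta (m+3+1) : ℚ) := by exact_mod_cast key
  have hb : (0:ℚ) ≤ (beta (m+3) : ℚ) := by positivity
  have hm : (0:ℚ) ≤ (m:ℚ) := by positivity
  rw [div_le_div_iff₀ (by push_cast; positivity) (by push_cast; positivity)]
  push_cast
  push_cast at hk
  nlinarith [hk, hb, hm]
end

section
/- For every fixed integer k ≥ 1, the sequence n ↦ β_n · |s_{n,k}| / n! is nondecreasing for n ≥ max(k, 4); that is, for n ≥ max(k, 4) one has β_{n+1}·|s_{n+1,k}|/(n+1)! ≥ β_n·|s_{n,k}|/n!. -/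
open Finset

section AuxBeta
open scoped Classical
variable {n : ℕ}

private def upBlock (a : Fin n) (B : Finset (Fin n)) : Finset (Fin (n + 1)) :=
  if a ∈ B then insert (Fin.last n) (B.image Fin.castSucc) else B.image Fin.castSucc

private def downBlock (C : Finset (Fin (n + 1))) : Finset (Fin n) :=
  univ.filter fun x => x.castSucc ∈ C

private lemma mem_downBlock {C : Finset (Fin (n + 1))} {x : Fin n} :
    x ∈ downBlock C ↔ x.castSucc ∈ C := by simp [downBlock]

private lemma last_notMem_image (B : Finset (Fin n)) :
    Fin.last n ∉ B.image Fin.castSucc := by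
  simp only [mem_image, not_exists]
  intro y
  rintro ⟨-, hy⟩
  exact (Fin.castSucc_lt_last y).ne hy

private lemma down_up (a : Fin n) (B : Finset (Fin n)) : downBlock (upBlock a B) = B := by
  ext x
  rw [mem_downBlock, upBlock]
  split_ifs with h <;>
    simp [mem_insert, Finset.mem_image, Fin.castSucc_inj, (Fin.castSucc_lt_last x).ne]

private lemma last_mem_upBlock {a : Fin n} {B : Finset (Fin n)} :
    Fin.last n ∈ upBlock a B ↔ a ∈ B := by
  rw [upBlock]
  split_ifs with h
  · simp [h, last_notMem_image]
  · simp only [h, iff_false]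
    exact last_notMem_image B

private def upMap (a : Fin n) (P : Finset (Finset (Fin n))) : Finset (Finset (Fin (n + 1))) :=
  P.image (upBlock a)

private lemma upMap_inj {a a' : Fin n} {P P' : Finset (Finset (Fin n))}
    (h : upMap a P = upMap a' P') : P = P' := by
  have h2 := congrArg (Finset.image downBlock) h
  simp only [upMap, image_image] at h2
  calc P = P.image (downBlock ∘ upBlock a) := by
          rw [show downBlock ∘ upBlock a = id from funext (down_up a), image_id]
    _ = P'.image (downBlock ∘ upBlock a') := h2
    _ = P' := by rw [show downBlock ∘ upBlock a' = id from funext (down_up a'), image_id]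

private lemma upMap_good (a : Fin n) {P : Finset (Finset (Fin n))}
    (hP : IsSetPartition P) (hc : ∀ B ∈ P, 2 ≤ B.card) :
    IsSetPartition (upMap a P) ∧ ∀ C ∈ upMap a P, 2 ≤ C.card := by
  obtain ⟨hne, huniq⟩ := hP
  have hcard : ∀ B ∈ P, 2 ≤ (upBlock a B).card := by
    intro B hB
    calc 2 ≤ B.card := hc B hB
      _ = (B.image Fin.castSucc).card :=
          (card_image_of_injective _ (Fin.castSucc_injective n)).symm
      _ ≤ (upBlock a B).card := by
          rw [upBlock]; split_ifs
          · exact card_le_card (subset_insert _ _)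
          · exact le_refl _
  refine ⟨⟨?_, ?_⟩, ?_⟩
  · intro C hC
    obtain ⟨B, hB, rfl⟩ := mem_image.1 hC
    exact card_pos.1 (lt_of_lt_of_le (by norm_num) (hcard B hB))
  · intro x
    refine Fin.lastCases ?_ ?_ x
    · obtain ⟨B, ⟨hB, haB⟩, hUB⟩ := huniq a
      refine ⟨upBlock a B, ⟨mem_image_of_mem _ hB, last_mem_upBlock.2 haB⟩, ?_⟩
      rintro C ⟨hC, hlC⟩
      obtain ⟨B', hB', rfl⟩ := mem_image.1 hC
      have haB' : a ∈ B' := last_mem_upBlock.1 hlC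
      rw [hUB B' ⟨hB', haB'⟩]
    · intro y
      obtain ⟨B, ⟨hB, hyB⟩, hUB⟩ := huniq y
      refine ⟨upBlock a B, ⟨mem_image_of_mem _ hB, ?_⟩, ?_⟩
      · rw [← mem_downBlock, down_up]; exact hyB
      rintro C ⟨hC, hyC⟩
      obtain ⟨B', hB', rfl⟩ := mem_image.1 hC
      rw [← mem_downBlock, down_up] at hyC
      rw [hUB B' ⟨hB', hyC⟩]
  · intro C hC; obtain ⟨B, hB, rfl⟩ := mem_image.1 hC; exact hcard B hB

private noncomputable def pick [NeZero n] (P : Finset (Finset (Fin n))) : Fin n :=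
  if h : ∃ x : Fin n, ∀ B ∈ P, x ∈ B → (0 : Fin n) ∉ B then h.choose else 0

private lemma pick_spec [NeZero n] {P : Finset (Finset (Fin n))}
    (hP : IsSetPartition P) (h : ∃ B ∈ P, (0 : Fin n) ∉ B) :
    ∀ B ∈ P, pick P ∈ B → (0 : Fin n) ∉ B := by
  obtain ⟨B, hB, h0⟩ := h
  obtain ⟨x, hx⟩ := hP.1 B hB
  have hex : ∃ x : Fin n, ∀ B' ∈ P, x ∈ B' → (0 : Fin n) ∉ B' := by
    refine ⟨x, fun B' hB' hxB' => ?_⟩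
    obtain ⟨Bu, _, hU⟩ := hP.2 x
    rw [hU B' ⟨hB', hxB'⟩, ← hU B ⟨hB, hx⟩]
    exact h0
  rw [pick, dif_pos hex]
  exact hex.choose_spec

private lemma beta_eq_card_s6 :
    beta n = (univ.filter (fun P : Finset (Finset (Fin n)) =>
      IsSetPartition P ∧ ∀ B ∈ P, 2 ≤ B.card)).card := by
  classical
  rw [beta, Nat.card_eq_fintype_card, Fintype.card_subtype]

private lemma singleBlock_eq {P : Finset (Finset (Fin n))} [NeZero n]
    (hP : IsSetPartition P) (hall : ∀ B ∈ P, (0 : Fin n) ∈ B) :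
    P = {(univ : Finset (Fin n))} := by
  obtain ⟨B₀, ⟨hB₀, h0B₀⟩, hU⟩ := hP.2 0
  have hBall : ∀ B ∈ P, B = B₀ := fun B hB => hU B ⟨hB, hall B hB⟩
  have hB₀univ : B₀ = univ := by
    ext x
    simp only [mem_univ, iff_true]
    obtain ⟨Bx, ⟨hBx, hxBx⟩, -⟩ := hP.2 x
    rw [← hBall Bx hBx]; exact hxBx
  ext B
  simp only [mem_singleton]
  constructor
  · intro hB; rw [hBall B hB, hB₀univ]
  · intro hB; rw [hB, ← hB₀univ]; exact hB₀

private lemma two_mul_beta_le (hn : 2 ≤ n) : 2 * beta n ≤ beta (n + 1) + 1 := by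
  have : NeZero n := ⟨by omega⟩
  rw [beta_eq_card_s6 (n := n), beta_eq_card_s6 (n := n + 1)]
  set good : Finset (Finset (Fin n)) → Prop := fun P =>
    IsSetPartition P ∧ ∀ B ∈ P, 2 ≤ B.card with hgood
  set A : Finset (Finset (Finset (Fin n))) := univ.filter good with hA
  set p : Finset (Finset (Fin n)) → Prop := fun P => ∃ B ∈ P, (0 : Fin n) ∉ B with hp
  have hmemA : ∀ P ∈ A, good P := fun P hP => (mem_filter.1 hP).2
  set X : Finset (Finset (Finset (Fin (n + 1)))) := A.image (upMap (0 : Fin n)) with hX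
  set Y : Finset (Finset (Finset (Fin (n + 1)))) :=
    (A.filter p).image (fun P => upMap (pick P) P) with hY
  have hXcard : X.card = A.card :=
    card_image_of_injective _ (fun P P' h => upMap_inj h)
  have hYcard : Y.card = (A.filter p).card :=
    card_image_of_injOn (fun P _ P' _ h => upMap_inj h)
  have hXsub : X ⊆ univ.filter (fun P : Finset (Finset (Fin (n+1))) =>
      IsSetPartition P ∧ ∀ B ∈ P, 2 ≤ B.card) := by
    intro Q hQ
    obtain ⟨P, hP, rfl⟩ := mem_image.1 hQ
    obtain ⟨h1, h2⟩ := hmemA P hP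
    exact mem_filter.2 ⟨mem_univ _, upMap_good _ h1 h2⟩
  have hYsub : Y ⊆ univ.filter (fun P : Finset (Finset (Fin (n+1))) =>
      IsSetPartition P ∧ ∀ B ∈ P, 2 ≤ B.card) := by
    intro Q hQ
    obtain ⟨P, hP, rfl⟩ := mem_image.1 hQ
    obtain ⟨h1, h2⟩ := hmemA P (filter_subset _ _ hP)
    exact mem_filter.2 ⟨mem_univ _, upMap_good _ h1 h2⟩
  have hdisj : Disjoint X Y := by
    rw [disjoint_left]
    intro Q hQX hQY
    obtain ⟨P, hPA, hQ1⟩ := mem_image.1 hQX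
    obtain ⟨P', hP'A, hQ2⟩ := mem_image.1 hQY
    have hPP' : P = P' := upMap_inj (hQ1.trans hQ2.symm)
    subst hPP'
    have hPart : IsSetPartition P := (hmemA P hPA).1
    have hpP : p P := (mem_filter.1 hP'A).2
    have hpick := pick_spec hPart hpP
    obtain ⟨B₀, ⟨hB₀, h0B₀⟩, -⟩ := hPart.2 0
    have hC : upBlock (0 : Fin n) B₀ ∈ upMap (pick P) P := by
      rw [← hQ1.trans hQ2.symm, upMap]; exact mem_image_of_mem _ hB₀
    obtain ⟨B', hB', hEq⟩ := mem_image.1 hC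
    have hlast : Fin.last n ∈ upBlock (pick P) B' := by
      rw [hEq]; exact last_mem_upBlock.2 h0B₀
    have hpickB' : pick P ∈ B' := last_mem_upBlock.1 hlast
    have hBB : B' = B₀ := by
      have := congrArg downBlock hEq
      rwa [down_up, down_up] at this
    exact hpick B₀ hB₀ (hBB ▸ hpickB') h0B₀
  have hunion : X.card + Y.card ≤ (univ.filter (fun P : Finset (Finset (Fin (n+1))) =>
      IsSetPartition P ∧ ∀ B ∈ P, 2 ≤ B.card)).card := by
    rw [← card_union_of_disjoint hdisj]
    exact card_le_card (union_subset hXsub hYsub)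
  have hsplit : (A.filter p).card + (A.filter (fun P => ¬ p P)).card = A.card :=
    card_filter_add_card_filter_not _
  have hone : (A.filter (fun P => ¬ p P)).card ≤ 1 := by
    apply card_le_one.2
    intro P hP P' hP'
    have e1 : P = {(univ : Finset (Fin n))} := by
      have h1 := hmemA P (filter_subset _ _ hP)
      have h2 := (mem_filter.1 hP).2
      simp only [hp, not_exists, not_and, not_not] at h2
      exact singleBlock_eq h1.1 h2
    have e2 : P' = {(univ : Finset (Fin n))} := by
      have h1 := hmemA P' (filter_subset _ _ hP')
      have h2 := (mem_filter.1 hP').2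
      simp only [hp, not_exists, not_and, not_not] at h2
      exact singleBlock_eq h1.1 h2
    rw [e1, e2]
  omega

private lemma two_le_beta (hn : 4 ≤ n) : 2 ≤ beta n := by
  rw [beta_eq_card_s6]
  rw [show (2 : ℕ) = 1 + 1 from rfl, Nat.add_one_le_iff, Finset.one_lt_card]
  have x0 : Fin n := ⟨0, by omega⟩
  set a0 : Fin n := ⟨0, by omega⟩ with ha0
  set a1 : Fin n := ⟨1, by omega⟩ with ha1
  set a2 : Fin n := ⟨2, by omega⟩ with ha2
  have h01 : a0 ≠ a1 := by simp [ha0, ha1, Fin.ext_iff]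
  set S : Finset (Fin n) := {a0, a1} with hS
  have h2S : a2 ∉ S := by simp [hS, ha0, ha1, ha2, Fin.ext_iff]
  have h0S : a0 ∈ S := by simp [hS]
  have hScard : S.card = 2 := card_pair h01
  have hP1 : IsSetPartition ({(univ : Finset (Fin n))} : Finset (Finset (Fin n))) ∧
      ∀ B ∈ ({(univ : Finset (Fin n))} : Finset (Finset (Fin n))), 2 ≤ B.card := by
    refine ⟨⟨?_, ?_⟩, ?_⟩
    · intro B hB; rw [mem_singleton.1 hB]; exact ⟨a0, mem_univ _⟩
    · intro x
      exact ⟨univ, ⟨mem_singleton_self _, mem_univ _⟩, fun B hB => mem_singleton.1 hB.1⟩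
    · intro B hB; rw [mem_singleton.1 hB, card_univ, Fintype.card_fin]; omega
  have hP2 : IsSetPartition ({S, Sᶜ} : Finset (Finset (Fin n))) ∧
      ∀ B ∈ ({S, Sᶜ} : Finset (Finset (Fin n))), 2 ≤ B.card := by
    refine ⟨⟨?_, ?_⟩, ?_⟩
    · intro B hB
      rcases mem_insert.1 hB with rfl | hB
      · exact ⟨a0, h0S⟩
      · rw [mem_singleton.1 hB]; exact ⟨a2, mem_compl.2 h2S⟩
    · intro x
      by_cases hx : x ∈ S
      · refine ⟨S, ⟨mem_insert_self _ _, hx⟩, ?_⟩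
        rintro B ⟨hB, hxB⟩
        rcases mem_insert.1 hB with rfl | hB
        · rfl
        · rw [mem_singleton.1 hB] at hxB; exact absurd hx (mem_compl.1 hxB)
      · refine ⟨Sᶜ, ⟨mem_insert_of_mem (mem_singleton_self _), mem_compl.2 hx⟩, ?_⟩
        rintro B ⟨hB, hxB⟩
        rcases mem_insert.1 hB with rfl | hB
        · exact absurd hxB hx
        · exact mem_singleton.1 hB
    · intro B hB
      rcases mem_insert.1 hB with rfl | hB
      · rw [hScard]
      · rw [mem_singleton.1 hB, card_compl, hScard, Fintype.card_fin]; omega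
  refine ⟨{(univ : Finset (Fin n))}, mem_filter.2 ⟨mem_univ _, hP1⟩,
    {S, Sᶜ}, mem_filter.2 ⟨mem_univ _, hP2⟩, ?_⟩
  intro h
  have : S ∈ ({(univ : Finset (Fin n))} : Finset (Finset (Fin n))) := by
    rw [h]; exact mem_insert_self _ _
  have hSuniv : S = univ := mem_singleton.1 this
  exact h2S (hSuniv ▸ mem_univ a2)

end AuxBeta

/-- For every fixed `k ≥ 1`, the sequence `n ↦ beta n * |s n k| / n!` is
nondecreasing for `n ≥ max k 4`. -/
theorem beta_mul_stirU_div_factorial_monotone (k : ℕ) (hk : 1 ≤ k)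
    (n : ℕ) (hn : max k 4 ≤ n) :
    ((beta n : ℚ) * (stirU n k : ℚ)) / (n.factorial : ℚ) ≤
      ((beta (n + 1) : ℚ) * (stirU (n + 1) k : ℚ)) / ((n + 1).factorial : ℚ) := by
  obtain ⟨j, rfl⟩ : ∃ j, k = j + 1 := ⟨k - 1, by omega⟩
  have hn4 : 4 ≤ n := le_trans (le_max_right _ _) hn
  have hb2 : 2 ≤ beta n := two_le_beta hn4
  have hbb : 2 * beta n ≤ beta (n + 1) + 1 := two_mul_beta_le (by omega)
  have hs : stirU (n + 1) (j + 1) = stirU n j + n * stirU n (j + 1) := rfl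
  have key : ((n : ℤ) + 1) * ((beta n : ℤ) * (stirU n (j + 1) : ℤ)) ≤
      (beta (n + 1) : ℤ) * (stirU (n + 1) (j + 1) : ℤ) := by
    rw [hs]
    push_cast
    set b := (beta n : ℤ) with hb
    set b' := (beta (n + 1) : ℤ) with hb'
    set s := (stirU n (j + 1) : ℤ) with hss
    set t := (stirU n j : ℤ) with ht
    set N := (n : ℤ) with hN
    have hb2' : (2 : ℤ) ≤ b := by rw [hb]; exact_mod_cast hb2
    have hbb' : 2 * b ≤ b' + 1 := by rw [hb, hb']; exact_mod_cast hbb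
    have hN4 : (4 : ℤ) ≤ N := by rw [hN]; exact_mod_cast hn4
    have hs0 : (0 : ℤ) ≤ s := by rw [hss]; positivity
    have ht0 : (0 : ℤ) ≤ t := by rw [ht]; positivity
    have hb'0 : (0 : ℤ) ≤ b' := by rw [hb']; positivity
    have h3 : (0 : ℤ) ≤ (N - 1) * (b - 1) - 1 := by nlinarith
    nlinarith [mul_nonneg h3 hs0,
      mul_le_mul_of_nonneg_right (show 2 * b - 1 ≤ b' by linarith)
        (mul_nonneg (by linarith : (0 : ℤ) ≤ N) hs0),
      mul_nonneg hb'0 ht0]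
  rw [div_le_div_iff₀ (by positivity) (by positivity), Nat.factorial_succ]
  have keyQ : ((n : ℚ) + 1) * ((beta n : ℚ) * (stirU n (j + 1) : ℚ)) ≤
      (beta (n + 1) : ℚ) * (stirU (n + 1) (j + 1) : ℚ) := by exact_mod_cast key
  have hfac : (0 : ℚ) < (n.factorial : ℚ) := by positivity
  push_cast
  nlinarith [keyQ, hfac]
end

section
/- For all integers n ≥ 1 and 1 ≤ k ≤ n with (n, k) ≠ (3, 1), the absolute values of the Matsunaga numbers satisfy |M_{n,k}| = n! · Σ_{j=k}^{n} (−1)^{n−j} · (β_j / j!) · |s_{j,k}|. -/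
open Finset

section partitions
variable {n : ℕ}

/-- the block of `x` in partition `P` -/
def blkOf (P : Finset (Finset (Fin n))) (hP : IsSetPartition P) (x : Fin n) : Finset (Fin n) :=
  P.choose (fun B => x ∈ B) (hP.2 x)

lemma blkOf_mem (P hP x) : blkOf (n := n) P hP x ∈ P := Finset.choose_mem _ _ _

lemma mem_blkOf (P hP x) : x ∈ blkOf (n := n) P hP x :=
  Finset.choose_property (fun B => x ∈ B) P (hP.2 x)

lemma block_eq {P : Finset (Finset (Fin n))} (hP : IsSetPartition P) {B C : Finset (Fin n)}
    (hB : B ∈ P) (hC : C ∈ P) {x : Fin n} (hxB : x ∈ B) (hxC : x ∈ C) : B = C := by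
  obtain ⟨D, _, hD⟩ := hP.2 x
  rw [hD B ⟨hB, hxB⟩, hD C ⟨hC, hxC⟩]

lemma eq_blkOf {P : Finset (Finset (Fin n))} {hP : IsSetPartition P} {B : Finset (Fin n)}
    (hB : B ∈ P) {x : Fin n} (hxB : x ∈ B) : B = blkOf P hP x :=
  block_eq hP hB (blkOf_mem P hP x) hxB (mem_blkOf P hP x)

lemma last_not_mem_map (B : Finset (Fin n)) :
    Fin.last n ∉ B.map Fin.castSuccEmb := by
  simp only [Finset.mem_map, Fin.castSuccEmb]
  rintro ⟨a, -, h⟩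
  exact absurd h (Fin.castSucc_lt_last a).ne

lemma castSucc_mem_map {B : Finset (Fin n)} {z : Fin n} :
    Fin.castSucc z ∈ B.map Fin.castSuccEmb ↔ z ∈ B := Finset.mem_map' _

/-- add the new element `last n` to the block of `x` -/
def addLast (P : Finset (Finset (Fin n))) (hP : IsSetPartition P) (x : Fin n) :
    Finset (Finset (Fin (n+1))) :=
  insert (insert (Fin.last n) ((blkOf P hP x).map Fin.castSuccEmb))
    ((P.erase (blkOf P hP x)).image (fun B => B.map Fin.castSuccEmb))

lemma mem_addLast {P : Finset (Finset (Fin n))} {hP : IsSetPartition P} {x : Fin n}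
    {C : Finset (Fin (n+1))} :
    C ∈ addLast P hP x ↔
      C = insert (Fin.last n) ((blkOf P hP x).map Fin.castSuccEmb) ∨
      ∃ B ∈ P, B ≠ blkOf P hP x ∧ C = B.map Fin.castSuccEmb := by
  simp only [addLast, Finset.mem_insert, Finset.mem_image, Finset.mem_erase]
  constructor
  · rintro (rfl | ⟨B, ⟨hBne, hBP⟩, rfl⟩)
    · exact Or.inl rfl
    · exact Or.inr ⟨B, hBP, hBne, rfl⟩
  · rintro (rfl | ⟨B, hBP, hBne, rfl⟩)
    · exact Or.inl rfl
    · exact Or.inr ⟨B, ⟨hBne, hBP⟩, rfl⟩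

lemma mem_addLast_of_last {P : Finset (Finset (Fin n))} {hP : IsSetPartition P} {x : Fin n}
    {C : Finset (Fin (n+1))} (hC : C ∈ addLast P hP x) (hl : Fin.last n ∈ C) :
    C = insert (Fin.last n) ((blkOf P hP x).map Fin.castSuccEmb) := by
  rw [mem_addLast] at hC
  rcases hC with rfl | ⟨B, _, _, rfl⟩
  · rfl
  · exact absurd hl (last_not_mem_map B)

lemma addLast_isPartition (P : Finset (Finset (Fin n))) (hP : IsSetPartition P) (x : Fin n) :
    IsSetPartition (addLast P hP x) := by
  constructor
  · intro C hC
    rw [mem_addLast] at hC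
    rcases hC with rfl | ⟨B, hBP, _, rfl⟩
    · exact Finset.insert_nonempty _ _
    · exact Finset.Nonempty.map (hP.1 B hBP)
  · intro y
    induction y using Fin.lastCases with
    | last =>
      refine ⟨insert (Fin.last n) ((blkOf P hP x).map Fin.castSuccEmb),
        ⟨mem_addLast.mpr (Or.inl rfl), Finset.mem_insert_self _ _⟩, ?_⟩
      rintro C ⟨hC, hlC⟩
      exact mem_addLast_of_last hC hlC
    | cast z =>
      by_cases hz : z ∈ blkOf P hP x
      · refine ⟨insert (Fin.last n) ((blkOf P hP x).map Fin.castSuccEmb),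
          ⟨mem_addLast.mpr (Or.inl rfl),
            Finset.mem_insert_of_mem (castSucc_mem_map.mpr hz)⟩, ?_⟩
        rintro C ⟨hC, hzC⟩
        rw [mem_addLast] at hC
        rcases hC with rfl | ⟨B, hBP, hBne, rfl⟩
        · rfl
        · exfalso
          exact hBne (block_eq hP hBP (blkOf_mem P hP x) (castSucc_mem_map.mp hzC) hz)
      · have hne : blkOf P hP z ≠ blkOf P hP x := by
          intro h
          exact hz (h ▸ mem_blkOf P hP z)
        refine ⟨(blkOf P hP z).map Fin.castSuccEmb,
          ⟨mem_addLast.mpr (Or.inr ⟨_, blkOf_mem P hP z, hne, rfl⟩),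
            castSucc_mem_map.mpr (mem_blkOf P hP z)⟩, ?_⟩
        rintro C ⟨hC, hzC⟩
        rw [mem_addLast] at hC
        rcases hC with rfl | ⟨B, hBP, hBne, rfl⟩
        · rcases Finset.mem_insert.mp hzC with h | h
          · exact absurd h (Fin.castSucc_lt_last z).ne
          · exact absurd (castSucc_mem_map.mp h) hz
        · have hBz : B = blkOf P hP z :=
            block_eq hP hBP (blkOf_mem P hP z) (castSucc_mem_map.mp hzC) (mem_blkOf P hP z)
          rw [hBz]

lemma addLast_card {P : Finset (Finset (Fin n))} {hP : IsSetPartition P} {x : Fin n}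
    (hc : ∀ B ∈ P, 2 ≤ B.card) :
    ∀ C ∈ addLast P hP x, 2 ≤ C.card := by
  intro C hC
  rw [mem_addLast] at hC
  rcases hC with rfl | ⟨B, hBP, _, rfl⟩
  · calc 2 ≤ (blkOf P hP x).card := hc _ (blkOf_mem P hP x)
      _ = ((blkOf P hP x).map Fin.castSuccEmb).card := (Finset.card_map _).symm
      _ ≤ _ := Finset.card_le_card (Finset.subset_insert _ _)
  · rw [Finset.card_map]; exact hc B hBP

lemma addLast_subset {P P' : Finset (Finset (Fin n))} {hP : IsSetPartition P}
    {hP' : IsSetPartition P'} {x x' : Fin n}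
    (h : addLast P hP x = addLast P' hP' x') : P ⊆ P' := by
  intro B hB
  by_cases hBb : B = blkOf P hP x
  · have hm : insert (Fin.last n) (B.map Fin.castSuccEmb) ∈ addLast P' hP' x' := by
      rw [← h, hBb]; exact mem_addLast.mpr (Or.inl rfl)
    have := mem_addLast_of_last hm (Finset.mem_insert_self _ _)
    have hmap : B.map Fin.castSuccEmb = (blkOf P' hP' x').map Fin.castSuccEmb := by
      have h1 := congrArg (fun s => Finset.erase s (Fin.last n)) this
      rwa [Finset.erase_insert (last_not_mem_map _),
        Finset.erase_insert (last_not_mem_map _)] at h1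
    rw [Finset.map_injective Fin.castSuccEmb hmap]
    exact blkOf_mem P' hP' x'
  · have hm : B.map Fin.castSuccEmb ∈ addLast P' hP' x' := by
      rw [← h]; exact mem_addLast.mpr (Or.inr ⟨B, hB, hBb, rfl⟩)
    rw [mem_addLast] at hm
    rcases hm with heq | ⟨B', hB', _, heq⟩
    · exfalso
      have : Fin.last n ∈ B.map Fin.castSuccEmb := heq ▸ Finset.mem_insert_self _ _
      exact last_not_mem_map B this
    · rw [Finset.map_injective Fin.castSuccEmb heq]; exact hB'

lemma addLast_inj {P P' : Finset (Finset (Fin n))} {hP : IsSetPartition P}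
    {hP' : IsSetPartition P'} {x x' : Fin n}
    (h : addLast P hP x = addLast P' hP' x') : P = P' :=
  Finset.Subset.antisymm (addLast_subset h) (addLast_subset h.symm)

end partitions

section special
variable {n : ℕ}

/-- the special partition `{{1,last}, everything else}` of `Fin (n+1)` -/
def spc (z1 : Fin n) : Finset (Finset (Fin (n+1))) :=
  insert {Fin.castSucc z1, Fin.last n} {(Finset.univ.erase z1).map Fin.castSuccEmb}

lemma mem_spc {z1 : Fin n} {C : Finset (Fin (n+1))} :
    C ∈ spc z1 ↔ C = {Fin.castSucc z1, Fin.last n} ∨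
      C = (Finset.univ.erase z1).map Fin.castSuccEmb := by
  simp [spc]

lemma erase_univ_nonempty (z1 : Fin n) (hn : 2 ≤ n) : (Finset.univ.erase z1).Nonempty := by
  rw [← Finset.card_pos, Finset.card_erase_of_mem (Finset.mem_univ _), Finset.card_univ,
    Fintype.card_fin]
  omega

lemma spc_isPartition (z1 : Fin n) (hn : 2 ≤ n) : IsSetPartition (spc z1) := by
  constructor
  · intro C hC
    rcases mem_spc.mp hC with rfl | rfl
    · exact Finset.insert_nonempty _ _
    · exact Finset.Nonempty.map (erase_univ_nonempty z1 hn)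
  · intro y
    induction y using Fin.lastCases with
    | last =>
      refine ⟨{Fin.castSucc z1, Fin.last n},
        ⟨mem_spc.mpr (Or.inl rfl), by simp⟩, ?_⟩
      rintro C ⟨hC, hlC⟩
      rcases mem_spc.mp hC with rfl | rfl
      · rfl
      · exact absurd hlC (last_not_mem_map _)
    | cast z =>
      by_cases hz : z = z1
      · subst hz
        refine ⟨{Fin.castSucc z, Fin.last n}, ⟨mem_spc.mpr (Or.inl rfl), by simp⟩, ?_⟩
        rintro C ⟨hC, hzC⟩
        rcases mem_spc.mp hC with rfl | rfl
        · rfl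
        · have := castSucc_mem_map.mp hzC
          rw [Finset.mem_erase] at this
          exact absurd rfl this.1
      · refine ⟨(Finset.univ.erase z1).map Fin.castSuccEmb,
          ⟨mem_spc.mpr (Or.inr rfl),
            castSucc_mem_map.mpr (Finset.mem_erase.mpr ⟨hz, Finset.mem_univ _⟩)⟩, ?_⟩
        rintro C ⟨hC, hzC⟩
        rcases mem_spc.mp hC with rfl | rfl
        · exfalso
          rcases Finset.mem_insert.mp hzC with h | h
          · exact hz (Fin.castSucc_injective n h)
          · rw [Finset.mem_singleton] at h
            exact absurd h (Fin.castSucc_lt_last z).ne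
        · rfl

lemma spc_card (z1 : Fin n) (hn : 3 ≤ n) : ∀ C ∈ spc z1, 2 ≤ C.card := by
  intro C hC
  rcases mem_spc.mp hC with rfl | rfl
  · rw [Finset.card_insert_of_notMem (by
      simp only [Finset.mem_singleton]
      exact (Fin.castSucc_lt_last z1).ne), Finset.card_singleton]
  · rw [Finset.card_map, Finset.card_erase_of_mem (Finset.mem_univ _), Finset.card_univ,
      Fintype.card_fin]
    omega

lemma eq_single_of_blk_univ {P : Finset (Finset (Fin n))} (hP : IsSetPartition P)
    {x : Fin n} (h : blkOf P hP x = Finset.univ) : P = {Finset.univ} := by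
  ext B
  rw [Finset.mem_singleton]
  constructor
  · intro hB
    obtain ⟨y, hy⟩ := hP.1 B hB
    have := block_eq hP hB (blkOf_mem P hP x) hy (by rw [h]; exact Finset.mem_univ y)
    rw [this, h]
  · rintro rfl
    rw [← h]
    exact blkOf_mem P hP x

lemma spc_ne_addLast (z1 : Fin n) {P : Finset (Finset (Fin n))} {hP : IsSetPartition P}
    (hc : ∀ B ∈ P, 2 ≤ B.card) (x : Fin n) : spc z1 ≠ addLast P hP x := by
  intro h
  have hm : ({Fin.castSucc z1, Fin.last n} : Finset (Fin (n+1))) ∈ addLast P hP x := by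
    rw [← h]; exact mem_spc.mpr (Or.inl rfl)
  have heq := mem_addLast_of_last hm (by simp)
  have hcard2 : ({Fin.castSucc z1, Fin.last n} : Finset (Fin (n+1))).card = 2 := by
    rw [Finset.card_insert_of_notMem (by
      simp only [Finset.mem_singleton]
      exact (Fin.castSucc_lt_last z1).ne), Finset.card_singleton]
  rw [heq, Finset.card_insert_of_notMem (last_not_mem_map _), Finset.card_map] at hcard2
  have := hc _ (blkOf_mem P hP x)
  omega

end special

/-- the subtype of singleton-free set partitions -/
def SnT (n : ℕ) := {P : Finset (Finset (Fin n)) // IsSetPartition P ∧ ∀ B ∈ P, 2 ≤ B.card}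

lemma beta_eq_card_s7 (n : ℕ) : beta n = Nat.card (SnT n) := rfl

noncomputable instance (n : ℕ) : Fintype (SnT n) := by
  unfold SnT
  classical
  infer_instance

def gFalse (n : ℕ) (hn : 1 ≤ n) (Ps : SnT n) : SnT (n+1) :=
  ⟨addLast Ps.1 Ps.2.1 ⟨0, hn⟩, addLast_isPartition _ _ _, addLast_card Ps.2.2⟩

noncomputable def gTrue (n : ℕ) (hn : 3 ≤ n) (Ps : SnT n) : SnT (n+1) :=
  if hu : blkOf Ps.1 Ps.2.1 ⟨0, by omega⟩ = Finset.univ then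
    ⟨spc ⟨1, by omega⟩, spc_isPartition _ (by omega), spc_card _ hn⟩
  else
    ⟨addLast Ps.1 Ps.2.1 ((Finset.univ \ blkOf Ps.1 Ps.2.1 ⟨0, by omega⟩).min'
        (Finset.sdiff_nonempty.mpr (fun hsub => hu (Finset.univ_subset_iff.mp hsub)))),
     addLast_isPartition _ _ _, addLast_card Ps.2.2⟩

lemma gFalse_inj (n : ℕ) (hn : 1 ≤ n) : Function.Injective (gFalse n hn) := by
  intro a b hab
  exact Subtype.ext (addLast_inj (congrArg Subtype.val hab))

lemma gTrue_inj (n : ℕ) (hn : 3 ≤ n) : Function.Injective (gTrue n hn) := by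
  intro a b hab
  by_cases h1 : blkOf a.1 a.2.1 (⟨0, by omega⟩ : Fin n) = Finset.univ <;>
    by_cases h2 : blkOf b.1 b.2.1 (⟨0, by omega⟩ : Fin n) = Finset.univ
  · apply Subtype.ext
    rw [eq_single_of_blk_univ a.2.1 h1, eq_single_of_blk_univ b.2.1 h2]
  · rw [show gTrue n hn a = _ from dif_pos h1, show gTrue n hn b = _ from dif_neg h2] at hab
    exact absurd (congrArg Subtype.val hab) (spc_ne_addLast _ b.2.2 _)
  · rw [show gTrue n hn a = _ from dif_neg h1, show gTrue n hn b = _ from dif_pos h2] at hab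
    exact absurd (congrArg Subtype.val hab).symm (spc_ne_addLast _ a.2.2 _)
  · rw [show gTrue n hn a = _ from dif_neg h1, show gTrue n hn b = _ from dif_neg h2] at hab
    exact Subtype.ext (addLast_inj (congrArg Subtype.val hab))

/-- the distinguishing predicate: the new element's block contains `0` -/
def PredQ (n : ℕ) (Q : Finset (Finset (Fin (n+1)))) (hn : 1 ≤ n) : Prop :=
  ∃ C ∈ Q, Fin.last n ∈ C ∧ Fin.castSucc (⟨0, hn⟩ : Fin n) ∈ C

lemma predQ_gFalse (n : ℕ) (hn : 1 ≤ n) (Ps : SnT n) : PredQ n (gFalse n hn Ps).1 hn := by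
  refine ⟨_, mem_addLast.mpr (Or.inl rfl), Finset.mem_insert_self _ _,
    Finset.mem_insert_of_mem (castSucc_mem_map.mpr (mem_blkOf _ _ _))⟩

lemma not_predQ_gTrue (n : ℕ) (hn : 3 ≤ n) (Ps : SnT n) :
    ¬ PredQ n (gTrue n hn Ps).1 (by omega) := by
  rintro ⟨C, hC, hl, hz⟩
  by_cases h1 : blkOf Ps.1 Ps.2.1 (⟨0, by omega⟩ : Fin n) = Finset.univ
  · rw [show gTrue n hn Ps = _ from dif_pos h1] at hC
    simp only at hC
    rcases mem_spc.mp hC with rfl | rfl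
    · rcases Finset.mem_insert.mp hz with h | h
      · have := Fin.castSucc_injective n h
        simp [Fin.ext_iff] at this
      · rw [Finset.mem_singleton] at h
        exact absurd h (Fin.castSucc_lt_last _).ne
    · exact absurd hl (last_not_mem_map _)
  · rw [show gTrue n hn Ps = _ from dif_neg h1] at hC
    simp only at hC
    have heq := mem_addLast_of_last hC hl
    subst heq
    set z0 : Fin n := ⟨0, by omega⟩
    set m := (Finset.univ \ blkOf Ps.1 Ps.2.1 z0).min' _ with hm
    have hmnot : m ∉ blkOf Ps.1 Ps.2.1 z0 :=
      (Finset.mem_sdiff.mp (Finset.min'_mem _ _)).2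
    rcases Finset.mem_insert.mp hz with h | h
    · exact absurd h (Fin.castSucc_lt_last _).ne
    · have hz0 : z0 ∈ blkOf Ps.1 Ps.2.1 m := castSucc_mem_map.mp h
      have := block_eq Ps.2.1 (blkOf_mem Ps.1 Ps.2.1 m) (blkOf_mem Ps.1 Ps.2.1 z0) hz0
        (mem_blkOf _ _ _)
      exact hmnot (this ▸ mem_blkOf Ps.1 Ps.2.1 m)

lemma beta_mono (n : ℕ) (hn : 1 ≤ n) : beta n ≤ beta (n+1) := by
  rw [beta_eq_card_s7, beta_eq_card_s7]
  exact Nat.card_le_card_of_injective _ (gFalse_inj n hn)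

lemma beta_double (n : ℕ) (hn : 3 ≤ n) : 2 * beta n ≤ beta (n+1) := by
  have hinj : Function.Injective
      (fun Pb : SnT n × Bool => if Pb.2 then gTrue n hn Pb.1 else gFalse n (by omega) Pb.1) := by
    rintro ⟨Ps, b⟩ ⟨Ps', b'⟩ heq
    cases b <;> cases b' <;> simp only [if_true, if_false, Bool.false_eq_true] at heq
    · rw [gFalse_inj n (by omega) heq]
    · exact absurd (heq ▸ predQ_gFalse n (by omega) Ps) (not_predQ_gTrue n hn Ps')
    · exact absurd (heq ▸ predQ_gFalse n (by omega) Ps') (not_predQ_gTrue n hn Ps)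
    · rw [gTrue_inj n hn heq]
  calc 2 * beta n = Nat.card (SnT n × Bool) := by
        rw [Nat.card_prod, beta_eq_card_s7]
        simp [mul_comm]
    _ ≤ Nat.card (SnT (n+1)) := Nat.card_le_card_of_injective _ hinj
    _ = beta (n+1) := (beta_eq_card_s7 _).symm

section stirlemmas
lemma stirS_eq_stirU : ∀ n k : ℕ, stirS n k = (-1)^(n+k) * (stirU n k : ℤ)
  | 0, 0 => by simp [stirS, stirU]
  | 0, k + 1 => by simp [stirS, stirU]
  | n + 1, 0 => by simp [stirS, stirU]
  | n + 1, k + 1 => by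
      rw [stirS, stirU, stirS_eq_stirU n k, stirS_eq_stirU n (k+1)]
      rw [show n+1+(k+1) = (n+k)+2 by ring, show n+(k+1) = (n+k)+1 by ring]
      push_cast
      ring

lemma stirU_of_lt : ∀ n k : ℕ, n < k → stirU n k = 0
  | 0, k, h => by cases k with | zero => omega | succ k => simp [stirU]
  | n+1, k, h => by
      cases k with
      | zero => omega
      | succ k =>
        rw [stirU, stirU_of_lt n k (by omega), stirU_of_lt n (k+1) (by omega)]
        simp

lemma stirU_self : ∀ n : ℕ, stirU n n = 1
  | 0 => rfl
  | n+1 => by rw [stirU, stirU_self n, stirU_of_lt n (n+1) (by omega)]; simp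

lemma stirS_of_lt (n k : ℕ) (h : n < k) : stirS n k = 0 := by
  rw [stirS_eq_stirU, stirU_of_lt n k h]; simp

lemma stirU_succ_ge (n k : ℕ) : n * stirU n (k+1) ≤ stirU (n+1) (k+1) := by
  rw [stirU]; omega
end stirlemmas


section matsu

lemma matsunaga_of_lt : ∀ n k : ℕ, n < k → matsunaga n k = 0
  | 0, k, h => rfl
  | 1, k, h => rfl
  | n+2, k, h => by
      rw [matsunaga, if_neg (by omega)]

lemma matsunaga_rec (n k : ℕ) (hn : 1 ≤ n) (hk : 1 ≤ k) (hkn : k ≤ n + 1) :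
    matsunaga (n+1) k = (n+1 : ℤ) * matsunaga n k + (beta (n+1) : ℤ) * stirS (n+1) k := by
  obtain ⟨m, rfl⟩ : ∃ m, n = m + 1 := ⟨n - 1, by omega⟩
  rw [show m+1+1 = m+2 by ring, matsunaga, if_pos (by omega)]
  push_cast; ring

/-- the signed-normalized Matsunaga number -/
noncomputable def Bmk (n k : ℕ) : ℤ := (-1)^(n+k) * matsunaga n k

lemma Bmk_rec (n k : ℕ) (hn : 1 ≤ n) (hk : 1 ≤ k) (hkn : k ≤ n + 1) :
    Bmk (n+1) k = (beta (n+1) : ℤ) * stirU (n+1) k - (n+1 : ℤ) * Bmk n k := by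
  rw [Bmk, Bmk, matsunaga_rec n k hn hk hkn, stirS_eq_stirU]
  rw [show n+1+k = (n+k)+1 by ring]
  ring_nf
  simp [show ((-1:ℤ))^(n*2) = 1 from by rw [mul_comm, pow_mul]; simp,
        show ((-1:ℤ))^(k*2) = 1 from by rw [mul_comm, pow_mul]; simp]

lemma Bmk_nonneg_self (k : ℕ) (hk : 2 ≤ k) :
    Bmk k k = (beta k : ℤ) * stirU k k := by
  obtain ⟨m, rfl⟩ : ∃ m, k = m + 1 := ⟨k - 1, by omega⟩
  rw [Bmk_rec m (m+1) (by omega) (by omega) (by omega), Bmk,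
    matsunaga_of_lt m (m+1) (by omega)]
  ring

/-- generic induction step -/
lemma Bmk_step (n k : ℕ) (hn : 3 ≤ n) (hk : 1 ≤ k) (hkn : k ≤ n)
    (h0 : 0 ≤ Bmk n k) (h1 : Bmk n k ≤ (beta n : ℤ) * stirU n k) :
    0 ≤ Bmk (n+1) k ∧ Bmk (n+1) k ≤ (beta (n+1) : ℤ) * stirU (n+1) k := by
  have hrec := Bmk_rec n k (by omega) hk (by omega)
  obtain ⟨k', rfl⟩ : ∃ k', k = k' + 1 := ⟨k - 1, by omega⟩
  have hs : (n : ℤ) * stirU n (k'+1) ≤ stirU (n+1) (k'+1) := by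
    exact_mod_cast stirU_succ_ge n k'
  have hb : 2 * (beta n : ℤ) ≤ (beta (n+1) : ℤ) := by exact_mod_cast beta_double n hn
  have hb0 : (0:ℤ) ≤ (beta n : ℤ) := by positivity
  have hb1 : (0:ℤ) ≤ (beta (n+1) : ℤ) := by positivity
  have hu0 : (0:ℤ) ≤ (stirU n (k'+1) : ℤ) := by positivity
  have hn3 : (3:ℤ) ≤ (n:ℤ) := by exact_mod_cast hn
  constructor
  · rw [hrec]
    have key : ((n:ℤ)+1) * Bmk n (k'+1) ≤ (beta (n+1) : ℤ) * stirU (n+1) (k'+1) := by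
      calc ((n:ℤ)+1) * Bmk n (k'+1) ≤ ((n:ℤ)+1) * ((beta n : ℤ) * stirU n (k'+1)) := by
            apply mul_le_mul_of_nonneg_left h1 (by linarith)
        _ = (((n:ℤ)+1) * (beta n : ℤ)) * stirU n (k'+1) := by ring
        _ ≤ ((n:ℤ) * (beta (n+1):ℤ)) * stirU n (k'+1) := by
            apply mul_le_mul_of_nonneg_right _ hu0
            nlinarith
        _ = (beta (n+1):ℤ) * ((n:ℤ) * stirU n (k'+1)) := by ring
        _ ≤ (beta (n+1) : ℤ) * stirU (n+1) (k'+1) := by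
            apply mul_le_mul_of_nonneg_left hs hb1
    linarith
  · rw [hrec]
    nlinarith
end matsu

lemma Bmk_one_one : Bmk 1 1 = 0 := by simp [Bmk, matsunaga]

lemma Bmk_inv : ∀ n, ∀ k, 1 ≤ k → k ≤ n → (k = 1 → 5 ≤ n) →
    0 ≤ Bmk n k ∧ Bmk n k ≤ (beta n : ℤ) * stirU n k := by
  intro n
  induction n with
  | zero => intro k hk hkn _; omega
  | succ n IH =>
    intro k hk hkn hk1
    by_cases hkn' : k = n + 1
    · subst hkn'
      have hk2 : 2 ≤ n + 1 := by by_contra h; have := hk1 (by omega); omega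
      rw [Bmk_nonneg_self _ hk2]
      refine ⟨by positivity, le_refl _⟩
    · have hkn2 : k ≤ n := by omega
      by_cases hk1' : k = 1
      · subst hk1'
        have h5 : 5 ≤ n + 1 := hk1 rfl
        by_cases hn5 : 5 ≤ n
        · exact Bmk_step n 1 (by omega) (by omega) hkn2 (IH 1 le_rfl hkn2 (fun _ => hn5)).1
            (IH 1 le_rfl hkn2 (fun _ => hn5)).2
        · -- n = 4 : explicit computation for Bmk 5 1
          have hn4 : n = 4 := by omega
          subst hn4
          have e1 := Bmk_one_one
          have r2 := Bmk_rec 1 1 (by omega) (by omega) (by omega)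
          have r3 := Bmk_rec 2 1 (by omega) (by omega) (by omega)
          have r4 := Bmk_rec 3 1 (by omega) (by omega) (by omega)
          have r5 := Bmk_rec 4 1 (by omega) (by omega) (by omega)
          have u2 : stirU 2 1 = 1 := by decide
          have u3 : stirU 3 1 = 2 := by decide
          have u4 : stirU 4 1 = 6 := by decide
          have u5 : stirU 5 1 = 24 := by decide
          rw [u2] at r2; rw [u3] at r3; rw [u4] at r4; rw [u5] at r5
          have m23 : (beta 2 : ℤ) ≤ (beta 3 : ℤ) := by exact_mod_cast beta_mono 2 (by omega)
          have d34 : 2 * (beta 3 : ℤ) ≤ (beta 4 : ℤ) := by exact_mod_cast beta_double 3 (by omega)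
          have d45 : 2 * (beta 4 : ℤ) ≤ (beta 5 : ℤ) := by exact_mod_cast beta_double 4 (by omega)
          have b2 : (0:ℤ) ≤ (beta 2 : ℤ) := by positivity
          have b3 : (0:ℤ) ≤ (beta 3 : ℤ) := by positivity
          push_cast at r2 r3 r4 r5
          constructor <;> [skip; rw [u5]] <;> push_cast <;> linarith
      · -- k ≥ 2, k ≤ n
        have hk2 : 2 ≤ k := by omega
        by_cases hn3 : 3 ≤ n
        · exact Bmk_step n k hn3 hk hkn2 (IH k hk hkn2 (by omega)).1 (IH k hk hkn2 (by omega)).2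
        · -- k = n = 2 : Bmk 3 2
          have hn2 : n = 2 := by omega
          have hke : k = 2 := by omega
          subst hn2; subst hke
          have r3 := Bmk_rec 2 2 (by omega) (by omega) (by omega)
          have b22 : Bmk 2 2 = (beta 2 : ℤ) * stirU 2 2 := Bmk_nonneg_self 2 (by omega)
          have u22 : stirU 2 2 = 1 := by decide
          have u32 : stirU 3 2 = 3 := by decide
          rw [u32] at r3; rw [u22] at b22
          have m23 : (beta 2 : ℤ) ≤ (beta 3 : ℤ) := by exact_mod_cast beta_mono 2 (by omega)
          have b2 : (0:ℤ) ≤ (beta 2 : ℤ) := by positivity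
          rw [u32]
          push_cast at r3 b22 ⊢
          constructor <;> linarith

lemma Bmk_nonneg (n k : ℕ) (hk : 1 ≤ k) (hkn : k ≤ n) (hnk : ¬(n = 3 ∧ k = 1)) :
    0 ≤ Bmk n k := by
  by_cases hk1 : k = 1
  · subst hk1
    have e1 := Bmk_one_one
    have r2 := Bmk_rec 1 1 (by omega) (by omega) (by omega)
    have r3 := Bmk_rec 2 1 (by omega) (by omega) (by omega)
    have r4 := Bmk_rec 3 1 (by omega) (by omega) (by omega)
    have u2 : stirU 2 1 = 1 := by decide
    have u3 : stirU 3 1 = 2 := by decide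
    have u4 : stirU 4 1 = 6 := by decide
    rw [u2] at r2; rw [u3] at r3; rw [u4] at r4
    have m23 : (beta 2 : ℤ) ≤ (beta 3 : ℤ) := by exact_mod_cast beta_mono 2 (by omega)
    have d34 : 2 * (beta 3 : ℤ) ≤ (beta 4 : ℤ) := by exact_mod_cast beta_double 3 (by omega)
    have b2 : (0:ℤ) ≤ (beta 2 : ℤ) := by positivity
    have b3 : (0:ℤ) ≤ (beta 3 : ℤ) := by positivity
    push_cast at r2 r3 r4
    by_cases h5 : 5 ≤ n
    · exact (Bmk_inv n 1 le_rfl hkn (fun _ => h5)).1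
    · interval_cases n
      · linarith [e1]
      · linarith
      · exact absurd ⟨rfl, rfl⟩ hnk
      · linarith
  · exact (Bmk_inv n k hk hkn (fun h => absurd h hk1)).1

lemma matsu_formula : ∀ n, 1 ≤ n → ∀ k, 1 ≤ k →
    (matsunaga n k : ℚ) =
      ∑ j ∈ Finset.Icc k n,
        ((n.factorial : ℚ) / (j.factorial : ℚ)) * (beta j : ℚ) * (stirS j k : ℚ) := by
  intro n hn
  induction n, hn using Nat.le_induction with
  | base =>
    intro k hk
    by_cases hk1 : k = 1
    · subst hk1
      simp [matsunaga, stirS, beta_one]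
    · rw [Finset.Icc_eq_empty (by omega)]
      simp [matsunaga]
  | succ n hn IH =>
    intro k hk
    by_cases hkn : k ≤ n + 1
    · have hins : Finset.Icc k (n+1) = insert (n+1) (Finset.Icc k n) := by
        ext x; simp only [Finset.mem_Icc, Finset.mem_insert]; omega
      rw [matsunaga_rec n k hn hk hkn, hins,
        Finset.sum_insert (by simp only [Finset.mem_Icc]; omega)]
      push_cast
      rw [IH k hk, Finset.mul_sum]
      have hfac : ((n+1).factorial : ℚ) / ((n+1).factorial : ℚ) = 1 := by
        rw [div_self]; positivity
      push_cast at hfac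
      rw [hfac]
      have : ∀ j ∈ Finset.Icc k n,
          (((n+1).factorial : ℚ) / (j.factorial : ℚ)) * (beta j : ℚ) * (stirS j k : ℚ)
          = ((n:ℚ)+1) * (((n.factorial : ℚ) / (j.factorial : ℚ)) * (beta j : ℚ) * (stirS j k : ℚ)) := by
        intro j hj
        rw [Nat.factorial_succ]
        push_cast
        ring
      rw [Finset.sum_congr rfl this]
      ring
    · rw [matsunaga_of_lt (n+1) k (by omega), Finset.Icc_eq_empty (by omega)]
      simp


/-- For `n ≥ 1`, `1 ≤ k ≤ n`, `(n, k) ≠ (3, 1)`: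
`|M n k| = n! * ∑_{j=k}^{n} (-1)^(n-j) * (beta j / j!) * |s j k|`. -/
theorem abs_matsunaga_closed_form (n k : ℕ) (hn : 1 ≤ n) (hk : 1 ≤ k) (hkn : k ≤ n)
    (hnk : (n, k) ≠ (3, 1)) :
    |(matsunaga n k : ℚ)| =
      (n.factorial : ℚ) *
        ∑ j ∈ Finset.Icc k n,
          (-1 : ℚ) ^ (n - j) * ((beta j : ℚ) / (j.factorial : ℚ)) *
            |(stirS j k : ℚ)| := by
  have hsign : 0 ≤ Bmk n k := by
    apply Bmk_nonneg n k hk hkn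
    rintro ⟨rfl, rfl⟩; exact hnk rfl
  have habs : |(matsunaga n k : ℚ)| = (-1:ℚ)^(n+k) * (matsunaga n k : ℚ) := by
    have h0 : (0:ℚ) ≤ (-1:ℚ)^(n+k) * (matsunaga n k : ℚ) := by
      have : (0:ℤ) ≤ (-1)^(n+k) * matsunaga n k := hsign
      exact_mod_cast this
    rw [← abs_of_nonneg h0, abs_mul, abs_pow, abs_neg, abs_one, one_pow, one_mul]
  rw [habs, matsu_formula n hn k hk, Finset.mul_sum, Finset.mul_sum]
  apply Finset.sum_congr rfl
  intro j hj
  rw [Finset.mem_Icc] at hj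
  have hsd : (stirS j k : ℚ) = (-1:ℚ)^(j+k) * (stirU j k : ℚ) := by
    rw [stirS_eq_stirU]; push_cast; ring
  have habsS : |(stirS j k : ℚ)| = (stirU j k : ℚ) := by
    rw [hsd, abs_mul, abs_pow, abs_neg, abs_one, one_pow, one_mul, abs_of_nonneg (by positivity)]
  have hsgn : (-1:ℚ)^(n+k) * (-1:ℚ)^(j+k) = (-1:ℚ)^(n-j) := by
    rw [← pow_add, show n+k+(j+k) = (n-j) + 2*(j+k) from by omega, pow_add, pow_mul]
    simp
  rw [habsS, hsd]
  have hjfac : (j.factorial : ℚ) ≠ 0 := by positivity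
  field_simp
  rw [← hsgn]; ring
end

section
/- For every integer n ≥ 1, the row sums of the Matsunaga numbers vanish: Σ_{k=1}^{n} M_{n,k} = 0. -/
open Finset

lemma stirS_eq_zero_of_lt (n : ℕ) : ∀ k, n < k → stirS n k = 0 := by
  induction n with
  | zero => intro k hk; cases k with
    | zero => omega
    | succ k => rfl
  | succ n ih =>
    intro k hk
    cases k with
    | zero => omega
    | succ k =>
      show stirS n k - (n : ℤ) * stirS n (k + 1) = 0
      rw [ih k (by omega), ih (k+1) (by omega)]
      ring

lemma stirS_zero_eq (n : ℕ) (h : 1 ≤ n) : stirS n 0 = 0 := by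
  cases n with
  | zero => omega
  | succ n => rfl

lemma sum_stirS (n : ℕ) (h : 2 ≤ n) : ∑ k ∈ Finset.range (n+1), stirS n k = 0 := by
  induction n with
  | zero => omega
  | succ n ih =>
    rcases Nat.lt_or_ge n 2 with h2 | h2
    · interval_cases n
      · omega
      · decide
    · have hA := ih h2
      have hsh : ∑ k ∈ Finset.range (n+1), stirS n (k+1) = 0 := by
        have hs := Finset.sum_range_succ' (stirS n) (n+1)
        rw [Finset.sum_range_succ, hA, stirS_zero_eq n (by omega),
          stirS_eq_zero_of_lt n (n+1) (by omega)] at hs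
        linarith
      rw [Finset.sum_range_succ']
      have key : ∀ k, stirS (n+1) (k+1) = stirS n k - (n : ℤ) * stirS n (k+1) :=
        fun k => rfl
      simp only [key]
      rw [Finset.sum_sub_distrib, ← Finset.mul_sum, hA, hsh,
        stirS_zero_eq (n+1) (by omega)]
      ring

lemma matsunaga_top (n k : ℕ) (h : n < k) : matsunaga n k = 0 := by
  match n with
  | 0 => rfl
  | 1 => rfl
  | n+2 => rw [matsunaga, if_neg (by omega)]

/-- For every `n ≥ 1`, the row sums of the Matsunaga numbers vanish. -/
theorem matsunaga_row_sum_eq_zero (n : ℕ) (hn : 1 ≤ n) :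
    ∑ k ∈ Finset.Icc 1 n, matsunaga n k = 0 := by
  induction n with
  | zero => omega
  | succ n ih =>
    match n, ih with
    | 0, _ => simp [matsunaga]
    | n+1, ih =>
      have ih' := ih (by omega)
      have hsum : ∑ k ∈ Finset.Icc 1 (n+2), stirS (n+2) k = 0 := by
        have h1 := sum_stirS (n+2) (by omega)
        have h2 : Finset.range (n+3) = insert 0 (Finset.Icc 1 (n+2)) := by
          ext x; simp [Finset.mem_range, Finset.mem_insert, Finset.mem_Icc]; omega
        rw [h2, Finset.sum_insert (by simp), stirS_zero_eq (n+2) (by omega)] at h1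
        linarith
      have step : ∀ k ∈ Finset.Icc 1 (n+2), matsunaga (n+2) k
          = ((n:ℤ)+2) * matsunaga (n+1) k + (beta (n+2) : ℤ) * stirS (n+2) k := by
        intro k hk
        simp only [Finset.mem_Icc] at hk
        rw [matsunaga, if_pos ⟨hk.1, hk.2⟩]
      rw [Finset.sum_congr rfl step, Finset.sum_add_distrib, ← Finset.mul_sum,
        ← Finset.mul_sum, hsum,
        Finset.sum_Icc_succ_top (by omega : 1 ≤ n + 2), ih',
        matsunaga_top (n+1) (n+2) (by omega)]
      ring
end
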